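/- arXiv:1206.4366 — 13 statements merged into one kernel-verified Lean document; each statement's English description precedes it below -/
import Mathlib

section
/- With n=2 agents, m=3 goods, quantities q_A = q_B = q_C = 1, requirements r_1 = r_2 = 3/2, true preference lists π_1 = (A,B,C) and π_2 = (B,C,A): under the SG mechanism, if agent 1 bids truthfully his sorted allocation is (1, 0, 1/2), while if agent 1 bids (B,A,C) and agent 2 bids truthfully, agent 1's sorted allocation is (1, 1/2, 0), which he lexicographic-prefers. Hence the SG mechanism is not strategy-proof without the condition min_j q_j ≥ max_i r_i. -/
open Finset

/-- Agent lexicographic-prefers share `a` to share `b` w.r.t. preference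
permutation `π` (where `π ℓ` is the `ℓ`-th most preferred good): the leftmost
nonzero coordinate of the sorted difference is positive. -/
def LexPref {m : ℕ} (π : Equiv.Perm (Fin m)) (a b : Fin m → ℝ) : Prop :=
  ∃ k : Fin m, (∀ l, l < k → a (π l) = b (π l)) ∧ b (π k) < a (π k)

/-- A feasible allocation: nonnegative, row sums `r i`, column sums `q j`. -/
def IsAlloc {n m : ℕ} (q : Fin m → ℝ) (r : Fin n → ℝ)
    (a : Fin n → Fin m → ℝ) : Prop :=
  (∀ i j, 0 ≤ a i j) ∧ (∀ i, ∑ j, a i j = r i) ∧ (∀ j, ∑ i, a i j = q j)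

/-- Time at which agent `i` starts consuming good `j` under bids `σ`, given the
exhaustion times `T`: the latest exhaustion time among goods `i` bids before `j`. -/
def startTime {n m : ℕ} (σ : Fin n → Equiv.Perm (Fin m)) (T : Fin m → ℝ)
    (i : Fin n) (j : Fin m) : ℝ :=
  (Finset.univ.filter (fun j' => (σ i).symm j' < (σ i).symm j)).fold max 0 T

/-- The Synchronized Greedy allocation with exhaustion times `T` under bids `σ`:
each agent consumes her most-preferred unexhausted good at constant rate `r i`
from time 0 to time 1, and each good `j` is fully consumed at time `T j`. -/
def IsSGAllocT {n m : ℕ} (q : Fin m → ℝ) (r : Fin n → ℝ)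
    (σ : Fin n → Equiv.Perm (Fin m)) (T : Fin m → ℝ)
    (a : Fin n → Fin m → ℝ) : Prop :=
  (∀ j, 0 ≤ T j ∧ T j ≤ 1) ∧
  (∀ i j, a i j = r i * max 0 (T j - startTime σ T i j)) ∧
  (∀ j, ∑ i, a i j = q j)

/-- `a` is the allocation produced by the SG mechanism under bids `σ`. -/
def IsSGAlloc {n m : ℕ} (q : Fin m → ℝ) (r : Fin n → ℝ)
    (σ : Fin n → Equiv.Perm (Fin m)) (a : Fin n → Fin m → ℝ) : Prop :=
  ∃ T, IsSGAllocT q r σ T a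


lemma st_eval {T : Fin 3 → ℝ} {σ : Fin 2 → Equiv.Perm (Fin 3)} {i : Fin 2} {j : Fin 3}
    (S : Finset (Fin 3))
    (h : Finset.univ.filter (fun j' => (σ i).symm j' < (σ i).symm j) = S) :
    startTime σ T i j = S.fold max 0 T := by rw [startTime, h]

lemma solveπ (x y z : ℝ) (h00 : 0 ≤ x) (h01 : x ≤ 1) (h10 : 0 ≤ y) (h11 : y ≤ 1)
    (h20 : 0 ≤ z) (h21 : z ≤ 1)
    (e0 : 3 / 2 * (0 ⊔ x) + 3 / 2 * (0 ⊔ (x - y ⊔ (z ⊔ 0))) = 1)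
    (e1 : 3 / 2 * (0 ⊔ (y - x ⊔ 0)) + 3 / 2 * (0 ⊔ y) = 1)
    (e2 : 3 / 2 * (0 ⊔ (z - x ⊔ (y ⊔ 0))) + 3 / 2 * (0 ⊔ (z - y ⊔ 0)) = 1) :
    x = 2/3 ∧ y = 2/3 ∧ z = 1 := by
  simp only [max_eq_left h20, max_eq_left h10, max_eq_left h00, max_eq_right h00,
    max_eq_right h10] at e0 e1 e2
  rcases le_total x y with h1 | h1
  · rcases le_total y z with h2 | h2
    · rcases le_total x z with h3 | h3
      · -- x ≤ y ≤ z
        rw [max_eq_right h2, max_eq_left (sub_nonpos.mpr h3)] at e0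
        rw [max_eq_right (sub_nonneg.mpr h1)] at e1
        rw [max_eq_right h1, max_eq_right (sub_nonneg.mpr h2)] at e2
        exact ⟨by linarith, by linarith, by linarith⟩
      · -- all equal
        have hyx : y ≤ x := h2.trans h3
        have hzy : z ≤ y := h3.trans h1
        rw [max_eq_right h2, max_eq_right (sub_nonneg.mpr h3)] at e0
        rw [max_eq_right (sub_nonneg.mpr h1)] at e1
        rw [max_eq_right h1, max_eq_left (sub_nonpos.mpr hzy)] at e2
        exact ⟨by linarith, by linarith, by linarith⟩
    · rcases le_total x z with h3 | h3
      · -- x ≤ z ≤ y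
        rw [max_eq_left h2, max_eq_left (sub_nonpos.mpr h1)] at e0
        rw [max_eq_right (sub_nonneg.mpr h1)] at e1
        rw [max_eq_right h1, max_eq_left (sub_nonpos.mpr h2)] at e2
        exact ⟨by linarith, by linarith, by linarith⟩
      · -- z ≤ x ≤ y
        rw [max_eq_left h2, max_eq_left (sub_nonpos.mpr h1)] at e0
        rw [max_eq_right (sub_nonneg.mpr h1)] at e1
        rw [max_eq_right h1, max_eq_left (sub_nonpos.mpr h2)] at e2
        exact ⟨by linarith, by linarith, by linarith⟩
  · rcases le_total y z with h2 | h2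
    · rcases le_total x z with h3 | h3
      · -- y ≤ x ≤ z
        rw [max_eq_right h2, max_eq_left (sub_nonpos.mpr h3)] at e0
        rw [max_eq_left (sub_nonpos.mpr h1)] at e1
        rw [max_eq_left h1, max_eq_right (sub_nonneg.mpr h3),
          max_eq_right (sub_nonneg.mpr h2)] at e2
        exact ⟨by linarith, by linarith, by linarith⟩
      · -- y ≤ z ≤ x
        rw [max_eq_right h2, max_eq_right (sub_nonneg.mpr h3)] at e0
        rw [max_eq_left (sub_nonpos.mpr h1)] at e1
        rw [max_eq_left h1, max_eq_left (sub_nonpos.mpr h3),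
          max_eq_right (sub_nonneg.mpr h2)] at e2
        exact ⟨by linarith, by linarith, by linarith⟩
    · rcases le_total x z with h3 | h3
      · -- x ≤ z ≤ y ≤ x : all equal
        rw [max_eq_left h2, max_eq_left (sub_nonpos.mpr (h3.trans h2))] at e0
        rw [max_eq_left (sub_nonpos.mpr h1)] at e1
        rw [max_eq_left h1, max_eq_right (sub_nonneg.mpr h3),
          max_eq_left (sub_nonpos.mpr h2)] at e2
        exact ⟨by linarith, by linarith, by linarith⟩
      · -- z ≤ y ≤ x
        rw [max_eq_left h2, max_eq_right (sub_nonneg.mpr h1)] at e0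
        rw [max_eq_left (sub_nonpos.mpr h1)] at e1
        rw [max_eq_left h1, max_eq_left (sub_nonpos.mpr h3),
          max_eq_left (sub_nonpos.mpr h2)] at e2
        exact ⟨by linarith, by linarith, by linarith⟩

lemma solveσ (x y z : ℝ) (h00 : 0 ≤ x) (h01 : x ≤ 1) (h10 : 0 ≤ y) (h11 : y ≤ 1)
    (h20 : 0 ≤ z) (h21 : z ≤ 1)
    (f0 : 3 / 2 * (0 ⊔ (x - y ⊔ 0)) + 3 / 2 * (0 ⊔ (x - y ⊔ (z ⊔ 0))) = 1)
    (f1 : 3 / 2 * (0 ⊔ y) + 3 / 2 * (0 ⊔ y) = 1)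
    (f2 : 3 / 2 * (0 ⊔ (z - x ⊔ (y ⊔ 0))) + 3 / 2 * (0 ⊔ (z - y ⊔ 0)) = 1) :
    x = 1 ∧ y = 1/3 ∧ z = 1 := by
  simp only [max_eq_left h20, max_eq_left h10, max_eq_left h00, max_eq_right h00,
    max_eq_right h10] at f0 f1 f2
  rcases le_total x y with h1 | h1
  · rcases le_total y z with h2 | h2
    · rcases le_total x z with h3 | h3
      · -- x ≤ y ≤ z
        rw [max_eq_left (sub_nonpos.mpr h1), max_eq_right h2,
          max_eq_left (sub_nonpos.mpr h3)] at f0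
        exact ⟨by linarith, by linarith, by linarith⟩
      · -- all equal
        rw [max_eq_left (sub_nonpos.mpr h1), max_eq_right h2,
          max_eq_right (sub_nonneg.mpr h3)] at f0
        exact ⟨by linarith, by linarith, by linarith⟩
    · rcases le_total x z with h3 | h3
      · -- x ≤ z ≤ y
        rw [max_eq_left h2, max_eq_left (sub_nonpos.mpr h1)] at f0
        exact ⟨by linarith, by linarith, by linarith⟩
      · -- z ≤ x ≤ y
        rw [max_eq_left h2, max_eq_left (sub_nonpos.mpr h1)] at f0
        exact ⟨by linarith, by linarith, by linarith⟩
  · rcases le_total y z with h2 | h2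
    · rcases le_total x z with h3 | h3
      · -- y ≤ x ≤ z
        rw [max_eq_right (sub_nonneg.mpr h1), max_eq_right h2,
          max_eq_left (sub_nonpos.mpr h3)] at f0
        rw [max_eq_left h1, max_eq_right (sub_nonneg.mpr h3),
          max_eq_right (sub_nonneg.mpr h2)] at f2
        exact ⟨by linarith, by linarith, by linarith⟩
      · -- y ≤ z ≤ x
        rw [max_eq_right (sub_nonneg.mpr h1), max_eq_right h2,
          max_eq_right (sub_nonneg.mpr h3)] at f0
        rw [max_eq_left h1, max_eq_left (sub_nonpos.mpr h3),
          max_eq_right (sub_nonneg.mpr h2)] at f2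
        exact ⟨by linarith, by linarith, by linarith⟩
    · rcases le_total x z with h3 | h3
      · -- all equal
        rw [max_eq_right (sub_nonneg.mpr h1), max_eq_left h2,
          max_eq_right (sub_nonneg.mpr h1)] at f0
        exact ⟨by linarith, by linarith, by linarith⟩
      · -- z ≤ y ≤ x
        rw [max_eq_right (sub_nonneg.mpr h1), max_eq_left h2,
          max_eq_right (sub_nonneg.mpr h1)] at f0
        rw [max_eq_left h1, max_eq_left (sub_nonpos.mpr (h2.trans h1)),
          max_eq_left (sub_nonpos.mpr h2)] at f2
        exact ⟨by linarith, by linarith, by linarith⟩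

/-- Counterexample to strategy-proofness without `min q ≥ max r`:
`n = 2`, `m = 3`, `q_A = q_B = q_C = 1`, `r_1 = r_2 = 3/2`, true preferences
`π₁ = (A,B,C)`, `π₂ = (B,C,A)`.  Truthfully agent 1 gets sorted allocation
`(1, 0, 1/2)`; bidding `(B,A,C)` she gets `(1, 1/2, 0)`, which she
lexicographic-prefers. -/
theorem sg_not_strategyproof
    (aπ aσ : Fin 2 → Fin 3 → ℝ)
    (hπ : IsSGAlloc (fun _ => 1) (fun _ => 3/2)
      ![Equiv.refl (Fin 3), finRotate 3] aπ)
    (hσ : IsSGAlloc (fun _ => 1) (fun _ => 3/2)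
      ![Equiv.swap 0 1, finRotate 3] aσ) :
    (∀ l, aπ 0 (Equiv.refl (Fin 3) l) = (![1, 0, 1/2] : Fin 3 → ℝ) l) ∧
    (∀ l, aσ 0 (Equiv.refl (Fin 3) l) = (![1, 1/2, 0] : Fin 3 → ℝ) l) ∧
    LexPref (Equiv.refl (Fin 3)) (aσ 0) (aπ 0) := by
  obtain ⟨T, hT, ha, hq⟩ := hπ
  obtain ⟨S, hS, hb, hp⟩ := hσ
  -- truthful system
  have e0 := hq 0
  have e1 := hq 1
  have e2 := hq 2
  rw [Fin.sum_univ_two, ha 0 0, ha 1 0,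
    st_eval ∅ (by decide), st_eval {1, 2} (by decide)] at e0
  rw [Fin.sum_univ_two, ha 0 1, ha 1 1,
    st_eval {0} (by decide), st_eval ∅ (by decide)] at e1
  rw [Fin.sum_univ_two, ha 0 2, ha 1 2,
    st_eval {0, 1} (by decide), st_eval {1} (by decide)] at e2
  simp only [Finset.fold_insert_idem, Finset.fold_singleton, Finset.fold_empty,
    sub_zero] at e0 e1 e2
  obtain ⟨hx, hy, hz⟩ := solveπ (T 0) (T 1) (T 2) (hT 0).1 (hT 0).2 (hT 1).1 (hT 1).2
    (hT 2).1 (hT 2).2 e0 e1 e2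
  -- manipulated system
  have f0 := hp 0
  have f1 := hp 1
  have f2 := hp 2
  rw [Fin.sum_univ_two, hb 0 0, hb 1 0,
    st_eval {1} (by decide), st_eval {1, 2} (by decide)] at f0
  rw [Fin.sum_univ_two, hb 0 1, hb 1 1,
    st_eval ∅ (by decide), st_eval ∅ (by decide)] at f1
  rw [Fin.sum_univ_two, hb 0 2, hb 1 2,
    st_eval {0, 1} (by decide), st_eval {1} (by decide)] at f2
  simp only [Finset.fold_insert_idem, Finset.fold_singleton, Finset.fold_empty,
    sub_zero] at f0 f1 f2
  obtain ⟨hu, hv, hw⟩ := solveσ (S 0) (S 1) (S 2) (hS 0).1 (hS 0).2 (hS 1).1 (hS 1).2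
    (hS 2).1 (hS 2).2 f0 f1 f2
  -- allocation values for agent 0
  have aπ0 : aπ 0 0 = 1 := by
    rw [ha 0 0, st_eval ∅ (by decide), Finset.fold_empty, hx]; norm_num
  have aπ1 : aπ 0 1 = 0 := by
    rw [ha 0 1, st_eval {0} (by decide), Finset.fold_singleton, hx, hy]; norm_num
  have aπ2 : aπ 0 2 = 1/2 := by
    rw [ha 0 2, st_eval {0, 1} (by decide), Finset.fold_insert_idem,
      Finset.fold_singleton, hx, hy, hz]; norm_num
  have aσ0 : aσ 0 0 = 1 := by
    rw [hb 0 0, st_eval {1} (by decide), Finset.fold_singleton, hu, hv]; norm_num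
  have aσ1 : aσ 0 1 = 1/2 := by
    rw [hb 0 1, st_eval ∅ (by decide), Finset.fold_empty, hv]; norm_num
  have aσ2 : aσ 0 2 = 0 := by
    rw [hb 0 2, st_eval {0, 1} (by decide), Finset.fold_insert_idem,
      Finset.fold_singleton, hu, hv, hw]; norm_num
  refine ⟨?_, ?_, 1, ?_, ?_⟩
  · intro l
    fin_cases l <;> simp [aπ0, aπ1, aπ2]
  · intro l
    fin_cases l <;> simp [aσ0, aσ1, aσ2]
  · intro l hl
    have : l = 0 := by omega
    subst this
    simp [aπ0, aσ0]
  · simp only [Equiv.refl_apply, aπ1, aσ1]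
    norm_num
end

section
/- The allocation produced by the SG mechanism in response to truthful bids is Pareto efficient with respect to lexicographic preferences: for every allocation a different from the SG allocation a^π, there exists an agent i who lexicographic-prefers a^π_i to a_i. -/
open Finset

/-- The allocation produced by the SG mechanism in response to truthful bids is
Pareto efficient w.r.t. lexicographic preferences: any different allocation is
strictly worse for some agent. -/
theorem sg_pareto_efficient {n m : ℕ} (q : Fin m → ℝ) (r : Fin n → ℝ)
    (π : Fin n → Equiv.Perm (Fin m))
    (hq : ∀ j, 0 < q j) (hr : ∀ i, 0 < r i) (hsum : ∑ i, r i = ∑ j, q j)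
    (aπ : Fin n → Fin m → ℝ) (hA : IsAlloc q r aπ) (hSG : IsSGAlloc q r π aπ) :
    ∀ a, IsAlloc q r a → a ≠ aπ → ∃ i, LexPref (π i) (aπ i) (a i) := by
  classical
  intro a hA' hne
  by_contra hcon
  push_neg at hcon
  obtain ⟨T, hT, haπ, hcolπ⟩ := hSG
  have hSne : ∃ i, a i ≠ aπ i := by
    by_contra h; push_neg at h; exact hne (funext h)
  obtain ⟨i₀, hi₀⟩ := hSne
  set D : Fin n → Finset (Fin m) :=
    fun i => univ.filter (fun k => a i (π i k) ≠ aπ i (π i k)) with hD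
  have hDne : ∀ i, a i ≠ aπ i → (D i).Nonempty := by
    intro i hi
    have : ∃ j, a i j ≠ aπ i j := by
      by_contra h; push_neg at h; exact hi (funext h)
    obtain ⟨j, hj⟩ := this
    exact ⟨(π i).symm j, by simp [hD, hj]⟩
  have hm : 0 < m := ((hDne i₀ hi₀).choose).pos
  set k : Fin n → Fin m :=
    fun i => if h : (D i).Nonempty then (D i).min' h else ⟨0, hm⟩ with hk
  have hkmem : ∀ i, a i ≠ aπ i → k i ∈ D i := by
    intro i hi
    simp only [hk, dif_pos (hDne i hi)]
    exact Finset.min'_mem _ _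
  have hkfirst : ∀ i, a i ≠ aπ i → ∀ l, l < k i → a i (π i l) = aπ i (π i l) := by
    intro i hi l hl
    by_contra h
    have hlD : l ∈ D i := by simp [hD, h]
    have := Finset.min'_le _ _ hlD
    simp only [hk, dif_pos (hDne i hi)] at hl
    exact absurd hl (not_lt.mpr this)
  have hkstrict : ∀ i, a i ≠ aπ i → aπ i (π i (k i)) < a i (π i (k i)) := by
    intro i hi
    have hne' : a i (π i (k i)) ≠ aπ i (π i (k i)) := by
      have := hkmem i hi
      simpa [hD] using this
    have hnl := hcon i
    rw [LexPref] at hnl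
    push_neg at hnl
    have := hnl (k i) (fun l hl => (hkfirst i hi l hl).symm)
    exact lt_of_le_of_ne this (Ne.symm hne')
  -- choose minimizer of T (π i (k i)) over differing agents
  set S : Finset (Fin n) := univ.filter (fun i => a i ≠ aπ i) with hSdef
  have hS0 : i₀ ∈ S := by simp [hSdef, hi₀]
  obtain ⟨i₁, hi₁S, hmin⟩ :=
    Finset.exists_min_image S (fun i => T (π i (k i))) ⟨i₀, hS0⟩
  have hi₁ : a i₁ ≠ aπ i₁ := by simpa [hSdef] using hi₁S
  set js : Fin m := π i₁ (k i₁) with hjs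
  -- column conservation at js gives an agent i' with a i' js < aπ i' js
  have hcolsum : ∑ i, a i js = ∑ i, aπ i js := by
    rw [hA'.2.2 js, hcolπ js]
  have hex : ∃ i', a i' js < aπ i' js := by
    by_contra h
    push_neg at h
    have hlt : ∑ i, aπ i js < ∑ i, a i js :=
      Finset.sum_lt_sum (fun i _ => h i) ⟨i₁, Finset.mem_univ _, hkstrict i₁ hi₁⟩
    exact absurd hcolsum (ne_of_gt hlt)
  obtain ⟨i', hi'lt⟩ := hex
  have hi' : a i' ≠ aπ i' := by
    intro h
    exact absurd (congrFun h js) (ne_of_lt hi'lt)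
  have hi'S : i' ∈ S := by simp [hSdef, hi']
  -- aπ i' js > 0, so i' started consuming js before T js
  have hpos : 0 < aπ i' js := lt_of_le_of_lt (hA'.1 i' js) hi'lt
  have hstart : startTime π T i' js < T js := by
    rw [haπ i' js] at hpos
    by_contra h
    push_neg at h
    have : max 0 (T js - startTime π T i' js) = 0 :=
      max_eq_left (by linarith)
    rw [this, mul_zero] at hpos
    exact lt_irrefl _ hpos
  -- i' prefers k i' strictly to js
  set k' : Fin m := (π i').symm js with hk'
  have hk'D : k' ∈ D i' := by
    simp only [hD, Finset.mem_filter, Finset.mem_univ, true_and, hk',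
      Equiv.apply_symm_apply]
    exact ne_of_lt hi'lt
  have hkle : k i' ≤ k' := by
    simp only [hk, dif_pos (hDne i' hi')]
    exact Finset.min'_le _ _ hk'D
  have hklt : k i' < k' := by
    rcases lt_or_eq_of_le hkle with h | h
    · exact h
    · exfalso
      have := hkstrict i' hi'
      rw [h] at this
      simp only [hk', Equiv.apply_symm_apply] at this
      exact absurd hi'lt (not_lt.mpr (le_of_lt this))
  -- T (π i' (k i')) ≤ startTime
  have hTle : T (π i' (k i')) ≤ startTime π T i' js := by
    rw [startTime]
    apply (Finset.le_fold_max _).mpr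
    refine Or.inr ⟨π i' (k i'), ?_, le_refl _⟩
    simp only [Finset.mem_filter, Finset.mem_univ, true_and, Equiv.symm_apply_apply]
    exact hklt
  have hminT : T js ≤ T (π i' (k i')) := hmin i' hi'S
  linarith
end

section
/- In the SG mechanism run with truthful bids, for each agent i and each k with 1 ≤ k ≤ m, the total amount agent i receives of her top k goods equals r_i · min(1, T_k), where T_k is the maximum over ℓ ≤ k of the exhaustion time of good π_i(ℓ) (times normalized so that the process ends at time 1); in particular agent i receives her top-k goods during the initial time interval [0, T_k]. -/
open Finset

lemma startTime_eq {n m : ℕ} (π : Fin n → Equiv.Perm (Fin m)) (T : Fin m → ℝ)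
    (i : Fin n) (l : Fin m) :
    startTime π T i (π i l) = (Finset.Iio l).fold max 0 (fun l' => T (π i l')) := by
  unfold startTime
  have h : Finset.univ.filter (fun j' => (π i).symm j' < (π i).symm (π i l))
      = (Finset.Iio l).image (π i) := by
    ext j'
    simp only [Finset.mem_filter, Finset.mem_univ, true_and, Finset.mem_image,
      Finset.mem_Iio, Equiv.symm_apply_apply]
    constructor
    · intro h; exact ⟨(π i).symm j', h, by simp⟩
    · rintro ⟨a, ha, rfl⟩; simpa using ha
  rw [h, Finset.fold_image (fun x _ y _ hxy => (π i).injective hxy)]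
  rfl

lemma sg_key {m : ℕ} (f : Fin (m+1) → ℝ) (k : Fin (m+1)) :
    ∑ l ∈ Finset.Iic k, max 0 (f l - (Finset.Iio l).fold max 0 f)
      = (Finset.Iic k).fold max 0 f := by
  induction k using Fin.induction with
  | zero =>
    have h1 : Finset.Iic (0 : Fin (m+1)) = {0} := by
      ext l; simp [Fin.le_zero_iff]
    have h2 : Finset.Iio (0 : Fin (m+1)) = (∅ : Finset (Fin (m+1))) := by
      ext l; simp
    simp [h1, h2, max_comm]
  | succ i ih =>
    have h1 : Finset.Iic i.succ = insert i.succ (Finset.Iic i.castSucc) := by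
      ext l
      simp only [Finset.mem_Iic, Finset.mem_insert, Fin.le_def, Fin.ext_iff,
        Fin.val_succ, Fin.coe_castSucc]
      omega
    have h2 : Finset.Iio i.succ = Finset.Iic i.castSucc := by
      ext l
      simp only [Finset.mem_Iio, Finset.mem_Iic, Fin.le_def, Fin.lt_def,
        Fin.val_succ, Fin.coe_castSucc]
      omega
    have hnot : i.succ ∉ Finset.Iic i.castSucc := by
      simp [Fin.le_def]
    rw [h1, Finset.sum_insert hnot, Finset.fold_insert hnot, h2, ih]
    set M := (Finset.Iic i.castSucc).fold max 0 f with hM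
    have h3 : max M (f i.succ) - M = max (M - M) (f i.succ - M) :=
      (max_sub_sub_right M (f i.succ) M).symm
    have h4 : max 0 (f i.succ - M) = max (f i.succ) M - M := by
      rw [max_comm (f i.succ) M, h3, sub_self]
    rw [h4]; ring

/-- Under truthful bids, the total amount agent `i` receives of her top `k+1`
goods equals `r i * min 1 T`, where `T` is the largest exhaustion time among
those goods: the top goods are received during the initial interval `[0, T]`. -/
theorem sg_topk_amount {n m : ℕ} (q : Fin m → ℝ) (r : Fin n → ℝ)
    (π : Fin n → Equiv.Perm (Fin m))
    (hq : ∀ j, 0 < q j) (hr : ∀ i, 0 < r i) (hsum : ∑ i, r i = ∑ j, q j)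
    (T : Fin m → ℝ) (aπ : Fin n → Fin m → ℝ)
    (hA : IsAlloc q r aπ) (hSG : IsSGAllocT q r π T aπ) :
    ∀ (i : Fin n) (k : Fin m),
      ∑ l ∈ Finset.Iic k, aπ i (π i l) =
        r i * min 1 ((Finset.Iic k).fold max 0 (fun l => T (π i l))) := by
  intro i k
  cases m with
  | zero => exact k.elim0
  | succ m' =>
    have hle : (Finset.Iic k).fold max 0 (fun l => T (π i l)) ≤ 1 :=
      (Finset.fold_max_le 1).mpr ⟨zero_le_one, fun x _ => (hSG.1 (π i x)).2⟩
    rw [min_eq_right hle]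
    have : ∀ l ∈ Finset.Iic k, aπ i (π i l)
        = r i * max 0 (T (π i l) - (Finset.Iio l).fold max 0 (fun l' => T (π i l'))) := by
      intro l _
      rw [hSG.2.1 i (π i l), startTime_eq]
    rw [Finset.sum_congr rfl this, ← Finset.mul_sum, sg_key]
end

section
/- Suppose all requirements r_i are equal. Under truthful bidding, the SG allocation is envy-free in the majorization sense: each agent i weakly majorization-prefers her own allocation a^π_{i*} to the allocation a^π_{i'*} of any other agent i', i.e., for every k with 1 ≤ k ≤ m, Σ_{ℓ=1}^k a^π_{i,π_i(ℓ)} ≥ Σ_{ℓ=1}^k a^π_{i',π_i(ℓ)}. -/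
open Finset

/- Auxiliary lemmas -/

noncomputable def Ftime {m : ℕ} (T : Fin m → ℝ) (σ : Equiv.Perm (Fin m)) (t : ℕ) : ℝ :=
  ((univ.filter (fun l : Fin m => l.val < t)).fold max 0 (fun l => T (σ l)))

lemma Ftime_nonneg {m : ℕ} (T : Fin m → ℝ) (σ : Equiv.Perm (Fin m)) (t : ℕ) :
    0 ≤ Ftime T σ t :=
  (Finset.le_fold_max _).2 (Or.inl le_rfl)

lemma Ftime_mono {m : ℕ} (T : Fin m → ℝ) (σ : Equiv.Perm (Fin m)) {s t : ℕ} (h : s ≤ t) :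
    Ftime T σ s ≤ Ftime T σ t := by
  apply (Finset.fold_max_le _).2
  refine ⟨Ftime_nonneg T σ t, fun x hx => ?_⟩
  refine (Finset.le_fold_max _).2 (Or.inr ⟨x, ?_, le_rfl⟩)
  simp only [mem_filter, mem_univ, true_and] at hx ⊢
  omega

lemma Ftime_zero {m : ℕ} (T : Fin m → ℝ) (σ : Equiv.Perm (Fin m)) : Ftime T σ 0 = 0 := by
  unfold Ftime
  rw [show (univ.filter (fun l : Fin m => l.val < 0)) = ∅ by simp, fold_empty]

lemma Ftime_succ {m : ℕ} (T : Fin m → ℝ) (σ : Equiv.Perm (Fin m)) {t : ℕ} (h : t < m) :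
    Ftime T σ (t+1) = max (T (σ ⟨t, h⟩)) (Ftime T σ t) := by
  unfold Ftime
  have he : (univ.filter (fun l : Fin m => l.val < t+1))
      = insert ⟨t,h⟩ (univ.filter (fun l : Fin m => l.val < t)) := by
    ext l; simp [Fin.ext_iff]; omega
  rw [he, fold_insert (by simp)]

lemma le_Ftime {m : ℕ} (T : Fin m → ℝ) (σ : Equiv.Perm (Fin m)) {t : ℕ} {l : Fin m}
    (h : l.val < t) : T (σ l) ≤ Ftime T σ t :=
  (Finset.le_fold_max _).2 (Or.inr ⟨l, by simp [h], le_rfl⟩)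

lemma startTime_eq_s7 {n m : ℕ} (σ : Fin n → Equiv.Perm (Fin m)) (T : Fin m → ℝ)
    (i : Fin n) (l : Fin m) :
    startTime σ T i (σ i l) = Ftime T (σ i) l.val := by
  unfold startTime Ftime
  have himg : (univ.filter (fun j' => (σ i).symm j' < (σ i).symm (σ i l)))
      = (univ.filter (fun l' : Fin m => l'.val < l.val)).image (σ i) := by
    ext j'
    simp only [mem_filter, mem_univ, true_and, mem_image, Equiv.symm_apply_apply]
    constructor
    · intro h; exact ⟨(σ i).symm j', h, by simp⟩
    · rintro ⟨l', hl', rfl⟩; rw [Equiv.symm_apply_apply]; exact hl'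
  rw [himg, Finset.fold_image (fun x _ y _ hxy => (σ i).injective hxy)]
  rfl


/-- Envy-freeness of SG with equal requirements: under truthful bidding each
agent weakly majorization-prefers her own allocation to any other agent's. -/
theorem sg_envy_free {n m : ℕ} (q : Fin m → ℝ) (ρ : ℝ)
    (π : Fin n → Equiv.Perm (Fin m))
    (hq : ∀ j, 0 < q j) (hρ : 0 < ρ) (hsum : ∑ _i : Fin n, ρ = ∑ j, q j)
    (aπ : Fin n → Fin m → ℝ)
    (hA : IsAlloc q (fun _ => ρ) aπ) (hSG : IsSGAlloc q (fun _ => ρ) π aπ) :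
    ∀ (i i' : Fin n) (k : Fin m),
      ∑ l ∈ Finset.Iic k, aπ i' (π i l) ≤ ∑ l ∈ Finset.Iic k, aπ i (π i l) := by
  obtain ⟨T, hT, ha, -⟩ := hSG
  intro i i' k
  have hρ0 : (0:ℝ) ≤ ρ := hρ.le
  set M : ℝ := Ftime T (π i) (k.val + 1) with hM
  have hM0 : 0 ≤ M := Ftime_nonneg _ _ _
  have key : ∀ (i₀ : Fin n) (l : Fin m),
      aπ i₀ (π i₀ l) = ρ * (Ftime T (π i₀) (l.val+1) - Ftime T (π i₀) l.val) := by
    intro i₀ l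
    rw [ha i₀ (π i₀ l), startTime_eq_s7]
    have hsucc : Ftime T (π i₀) (l.val+1)
        = max (T (π i₀ l)) (Ftime T (π i₀) l.val) := by
      rw [Ftime_succ T (π i₀) l.isLt]
    rw [hsucc]
    congr 1
    rcases le_total (T (π i₀ l)) (Ftime T (π i₀) l.val) with h | h
    · rw [max_eq_right h, max_eq_left (by linarith), sub_self]
    · rw [max_eq_left h, max_eq_right (by linarith)]
  -- own sum
  have own : ∑ l ∈ Finset.Iic k, aπ i (π i l) = ρ * M := by
    have h1 : ∑ l ∈ Finset.Iic k, aπ i (π i l)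
        = ∑ l ∈ Finset.Iic k,
            (ρ * (Ftime T (π i) (l.val+1) - Ftime T (π i) l.val)) :=
      Finset.sum_congr rfl fun l _ => key i l
    have h2 : ∑ l ∈ Finset.Iic k,
          (ρ * (Ftime T (π i) (l.val+1) - Ftime T (π i) l.val))
        = ∑ t ∈ Finset.range (k.val+1),
            (ρ * (Ftime T (π i) (t+1) - Ftime T (π i) t)) := by
      have hr : Finset.range (k.val+1) = (Finset.Iic k).map Fin.valEmbedding := by
        rw [Fin.map_valEmbedding_Iic]; ext t; simp [Nat.lt_succ_iff]
      rw [hr, Finset.sum_map]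
      rfl
    rw [h1, h2, ← Finset.mul_sum,
      Finset.sum_range_sub (fun t => Ftime T (π i) t), Ftime_zero, sub_zero]
  -- other agent's sum
  have other : ∑ l ∈ Finset.Iic k, aπ i' (π i l) ≤ ρ * M := by
    set G : ℕ → ℝ := fun t => min (Ftime T (π i') t) M with hG
    have hGmono : Monotone G := fun s t h => min_le_min (Ftime_mono _ _ h) le_rfl
    set L : Finset (Fin m) := (Finset.Iic k).image (fun l => (π i').symm (π i l)) with hL
    have h1 : ∑ l ∈ Finset.Iic k, aπ i' (π i l) = ∑ l' ∈ L, aπ i' (π i' l') := by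
      rw [hL, Finset.sum_image (fun x _ y _ h => (π i).injective ((π i').symm.injective h))]
      simp
    have h2 : ∀ l' ∈ L, aπ i' (π i' l') ≤ ρ * (G (l'.val+1) - G l'.val) := by
      intro l' hl'
      obtain ⟨l, hl, rfl⟩ := Finset.mem_image.1 hl'
      set l'' := (π i').symm (π i l) with hl''
      have hTle : T (π i' l'') ≤ M := by
        rw [hl'', Equiv.apply_symm_apply]
        have hlk' : l ≤ k := Finset.mem_Iic.1 hl
        have hlk : l.val ≤ k.val := hlk'
        exact le_Ftime T (π i) (Nat.lt_succ_of_le hlk)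
      rw [key]
      apply mul_le_mul_of_nonneg_left _ hρ0
      have hsucc : Ftime T (π i') (l''.val+1)
          = max (T (π i' l'')) (Ftime T (π i') l''.val) := by
        rw [Ftime_succ T (π i') l''.isLt]
      rcases le_total (T (π i' l'')) (Ftime T (π i') l''.val) with hc | hc
      · rw [hsucc, max_eq_right hc, sub_self]
        have := hGmono (Nat.le_succ l''.val)
        linarith
      · have e1 : G (l''.val+1) = Ftime T (π i') (l''.val+1) :=
          min_eq_left (by rw [hsucc, max_eq_left hc]; exact hTle)
        have e2 : G l''.val = Ftime T (π i') l''.val :=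
          min_eq_left (hc.trans hTle)
        rw [e1, e2]
    have h3 : ∑ l' ∈ L, (ρ * (G (l'.val+1) - G l'.val))
        ≤ ∑ l' : Fin m, (ρ * (G (l'.val+1) - G l'.val)) :=
      Finset.sum_le_sum_of_subset_of_nonneg (subset_univ _)
        (fun l' _ _ => mul_nonneg hρ0 (sub_nonneg.2 (hGmono (Nat.le_succ _))))
    have h4 : ∑ l' : Fin m, (ρ * (G (l'.val+1) - G l'.val)) = ρ * (G m - G 0) := by
      rw [← Finset.mul_sum]
      congr 1
      rw [Fin.sum_univ_eq_sum_range (fun t => G (t+1) - G t) m,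
        Finset.sum_range_sub (fun t => G t)]
    have hG0 : G 0 = 0 := by simp [hG, Ftime_zero, hM0]
    have hGm : G m ≤ M := min_le_right _ _
    calc ∑ l ∈ Finset.Iic k, aπ i' (π i l) = ∑ l' ∈ L, aπ i' (π i' l') := h1
      _ ≤ ∑ l' ∈ L, (ρ * (G (l'.val+1) - G l'.val)) := Finset.sum_le_sum h2
      _ ≤ ∑ l' : Fin m, (ρ * (G (l'.val+1) - G l'.val)) := h3
      _ = ρ * (G m - G 0) := h4
      _ ≤ ρ * M := by rw [hG0]; exact mul_le_mul_of_nonneg_left (by linarith) hρ0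
  rw [own]; exact other
end

section
/- The SG mechanism is strategy-proof when min_j q_j ≥ max_i r_i: if all agents other than agent 1 bid their true preferences, then for any bid σ_1 of agent 1, agent 1 weakly lexicographic-prefers her truthful-bid allocation a^π_{1*} to her allocation a^σ_{1*} under bid σ_1. -/
open Finset

/-!
Let `T'` and `T` be the exhaustion times of the goods under truthful bidding and under the
deviation of agent `i₀`. If some good `h` with `T' h ≤ c` is exhausted later under the deviation,
pick one with maximal delay `D = T h - T' h`, and among those one with the smallest `T' h`. Every
other agent then starts eating it at most `D` later and stops exactly `D` later, so she gets at
least as much of it, and strictly more if she got any; hence agent `i₀` gets strictly less of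
some good `j` with `T' j ≤ c`.

Let `k` be the first position in `π i₀` at which agent `i₀`'s shares differ, and `c` the time
at which, bidding truthfully, she moves on to the good at position `k`. A delayed good exhausted
by time `c` would yield a good at a position `≥ k` of which she truthfully gets more, although it
is exhausted before she reaches it. So the goods before position `k`, whose shares agree, are
exhausted by `c` under the deviation too; consuming them fills `[0, c]`, so she starts any later
good no earlier than `c`. If the good at position `k` is not delayed she also finishes it no
later; if it is, the delay argument with `c := T' (π i₀ k)` singles out exactly that good. Either
way she gets no more of it.
-/

open Equiv

section PrefixMax

variable {m : ℕ} (ρ : Perm (Fin m)) (T : Fin m → ℝ)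

-- the time at which an agent bidding `ρ` moves on to the good `ρ l`
def prefixMax (l : ℕ) : ℝ :=
  (univ.filter fun j => (ρ.symm j : ℕ) < l).fold max 0 T

def consumptionTime (j : Fin m) : ℝ :=
  max 0 (T j - prefixMax ρ T (ρ.symm j))

variable {ρ T}

lemma prefixMax_nonneg (l : ℕ) : 0 ≤ prefixMax ρ T l :=
  (le_fold_max _).2 (Or.inl le_rfl)

lemma le_prefixMax {j : Fin m} {l : ℕ} (h : (ρ.symm j : ℕ) < l) : T j ≤ prefixMax ρ T l :=
  (le_fold_max _).2 (Or.inr ⟨j, by simpa using h, le_rfl⟩)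

lemma prefixMax_mono : Monotone (prefixMax ρ T) := fun _ _ hl =>
  (fold_max_le _).2 ⟨prefixMax_nonneg _, fun _ hj => le_prefixMax ((mem_filter.1 hj).2.trans_le hl)⟩

lemma prefixMax_symm_succ (j : Fin m) :
    prefixMax ρ T (ρ.symm j + 1) = max (T j) (prefixMax ρ T (ρ.symm j)) := by
  have : univ.filter (fun j' => (ρ.symm j' : ℕ) < ρ.symm j + 1)
      = insert j (univ.filter fun j' => (ρ.symm j' : ℕ) < ρ.symm j) := by
    ext j'
    simp only [mem_filter, mem_univ, true_and, mem_insert, Nat.lt_succ_iff_lt_or_eq,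
      Fin.val_inj, ρ.symm.injective.eq_iff]
    tauto
  rw [prefixMax, this, fold_insert (by simp)]
  rfl

lemma consumptionTime_eq_sub (j : Fin m) :
    consumptionTime ρ T j = prefixMax ρ T (ρ.symm j + 1) - prefixMax ρ T (ρ.symm j) := by
  rw [prefixMax_symm_succ, ← max_sub_sub_right, sub_self, max_comm]
  rfl

lemma consumptionTime_nonneg (j : Fin m) : 0 ≤ consumptionTime ρ T j := le_max_left _ _

lemma consumptionTime_le {j : Fin m} (hj : 0 ≤ T j) : consumptionTime ρ T j ≤ T j :=
  max_le hj (sub_le_self _ (prefixMax_nonneg _))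

lemma prefixMax_lt_of_consumptionTime_pos {j : Fin m} (h : 0 < consumptionTime ρ T j) :
    prefixMax ρ T (ρ.symm j) < T j := by
  simpa [consumptionTime] using h

variable (ρ) in
lemma sum_filter_symm_lt_sub (g : ℕ → ℝ) {K : ℕ} (hK : K ≤ m) :
    ∑ j ∈ univ.filter (fun j => (ρ.symm j : ℕ) < K), (g (ρ.symm j + 1) - g (ρ.symm j))
      = g K - g 0 := by
  rw [← sum_range_sub]
  refine sum_nbij (fun j => ρ.symm j) (fun j hj => by simpa using hj)
    (fun _ _ _ _ h => ρ.symm.injective (Fin.ext h)) (fun l hl => ?_) (fun _ _ => rfl)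
  refine ⟨ρ ⟨l, (mem_range.1 hl).trans_le hK⟩, ?_, by simp⟩
  simpa using mem_range.1 hl

variable (ρ) in
lemma sum_symm_sub (g : ℕ → ℝ) : ∑ j, (g (ρ.symm j + 1) - g (ρ.symm j)) = g m - g 0 := by
  rw [← sum_filter_symm_lt_sub ρ g le_rfl, filter_true_of_mem fun j _ => (ρ.symm j).isLt]

lemma sum_filter_consumptionTime {K : ℕ} (hK : K ≤ m) :
    ∑ j ∈ univ.filter (fun j => (ρ.symm j : ℕ) < K), consumptionTime ρ T j = prefixMax ρ T K := by
  simp_rw [consumptionTime_eq_sub, sum_filter_symm_lt_sub ρ _ hK]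
  simp [prefixMax]

lemma sum_consumptionTime : ∑ j, consumptionTime ρ T j = prefixMax ρ T m := by
  simp_rw [consumptionTime_eq_sub, sum_symm_sub ρ (prefixMax ρ T)]
  simp [prefixMax]

end PrefixMax

section Delay

variable {m : ℕ} {ρ : Perm (Fin m)} {T T' : Fin m → ℝ}

lemma consumptionTime_lt_of_delay {j : Fin m} {D : ℝ} (hD : 0 < D) (hj : T j = T' j + D)
    (hbefore : ∀ h, T' h < T' j → T h < T' h + D) (hpos : 0 < consumptionTime ρ T' j) :
    consumptionTime ρ T' j < consumptionTime ρ T j := by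
  have hstart := prefixMax_lt_of_consumptionTime_pos hpos
  have hstart_delay : prefixMax ρ T (ρ.symm j) < prefixMax ρ T' (ρ.symm j) + D := by
    refine (fold_max_lt _).2 ⟨by linarith [prefixMax_nonneg (ρ := ρ) (T := T') (ρ.symm j)],
      fun h hh => ?_⟩
    have hh' : T' h ≤ prefixMax ρ T' (ρ.symm j) := le_prefixMax (mem_filter.1 hh).2
    linarith [hbefore h (hh'.trans_lt hstart)]
  calc consumptionTime ρ T' j = T' j - prefixMax ρ T' (ρ.symm j) :=
        max_eq_right (sub_nonneg.2 hstart.le)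
    _ < T j - prefixMax ρ T (ρ.symm j) := by linarith
    _ ≤ consumptionTime ρ T j := le_max_right _ _

lemma consumptionTime_le_of_delay {j : Fin m} {D : ℝ} (hD : 0 < D) (hj : T j = T' j + D)
    (hbefore : ∀ h, T' h < T' j → T h < T' h + D) :
    consumptionTime ρ T' j ≤ consumptionTime ρ T j := by
  rcases (consumptionTime_nonneg j).eq_or_lt with h0 | hpos
  · exact h0 ▸ consumptionTime_nonneg j
  · exact (consumptionTime_lt_of_delay hD hj hbefore hpos).le

end Delay

lemma exists_max_delay {α : Type*} [Fintype α] {T T' : α → ℝ} {c : ℝ}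
    (hdelay : ∃ h, T' h ≤ c ∧ T' h < T h) :
    ∃ j D, 0 < D ∧ T' j ≤ c ∧ T j = T' j + D ∧ ∀ h, T' h < T' j → T h < T' h + D := by
  classical
  obtain ⟨h₀, hh₀c, hh₀⟩ := hdelay
  set S := univ.filter fun h => T' h ≤ c
  obtain ⟨j₁, hj₁, hmax⟩ := S.exists_max_image (fun h => T h - T' h) ⟨h₀, by simpa [S] using hh₀c⟩
  set D := T j₁ - T' j₁
  obtain ⟨j, hj, hmin⟩ :=
    (S.filter fun h => T h - T' h = D).exists_min_image T' ⟨j₁, mem_filter.2 ⟨hj₁, rfl⟩⟩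
  simp only [S, mem_filter, mem_univ, true_and] at hj hmax hmin
  refine ⟨j, D, by linarith [hmax h₀ hh₀c], hj.1, by linarith [hj.2], fun h hh => ?_⟩
  have hhc : T' h ≤ c := hh.le.trans hj.1
  refine lt_of_le_of_ne (by linarith [hmax h hhc]) fun hD => ?_
  linarith [hmin h ⟨hhc, by linarith⟩]

lemma min_max_sub_min {M a b : ℝ} (hb : b ≤ M) : min M (max a b) - min M a = max 0 (b - a) := by
  grind

lemma le_prefixMax_of_consumptionTime_pos {m : ℕ} {τ : Perm (Fin m)} {T : Fin m → ℝ}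
    {P : Finset (Fin m)} {M : ℝ} (hPM : ∀ j ∈ P, T j ≤ M)
    (hPsum : M ≤ ∑ j ∈ P, consumptionTime τ T j) {j : Fin m} (hj : j ∉ P)
    (hpos : 0 < consumptionTime τ T j) : M ≤ prefixMax τ T (τ.symm j) := by
  rcases le_total M 0 with hM | hM
  · exact hM.trans (prefixMax_nonneg _)
  -- `ψ j` is the part of `[0, M]` during which the agent consumes `j`
  set ψ : Fin m → ℝ := fun j =>
    min M (prefixMax τ T (τ.symm j + 1)) - min M (prefixMax τ T (τ.symm j))
  have hψ_nonneg : ∀ j, 0 ≤ ψ j := fun j =>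
    sub_nonneg.2 (min_le_min_left _ (prefixMax_mono (Nat.le_succ _)))
  have hψ_sum : ∑ j, ψ j = M := by
    have hMm : M ≤ prefixMax τ T m := hPsum.trans <| sum_consumptionTime (ρ := τ) ▸
      sum_le_sum_of_subset_of_nonneg (subset_univ P) fun j _ _ => consumptionTime_nonneg j
    rw [sum_symm_sub τ (fun l => min M (prefixMax τ T l)), min_eq_left hMm]
    simp [prefixMax, hM]
  have hψ_P : ∑ j ∈ P, ψ j = ∑ j ∈ P, consumptionTime τ T j := sum_congr rfl fun j hj => by
    simp only [ψ, prefixMax_symm_succ, max_comm (T j), min_max_sub_min (hPM j hj)]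
    rfl
  have hψ_j : ψ j ≤ 0 := by
    have := sum_add_sum_compl P ψ
    linarith [single_le_sum (fun j _ => hψ_nonneg j) (mem_compl.2 hj)]
  have hlt := prefixMax_lt_of_consumptionTime_pos hpos
  by_contra! hMj
  simp only [ψ, prefixMax_symm_succ, max_eq_left hlt.le, min_eq_right hMj.le] at hψ_j
  linarith [lt_min hMj hlt]

section SG

variable {n m : ℕ} {q : Fin m → ℝ} {r : Fin n → ℝ} {σ π : Fin n → Perm (Fin m)}
  {T T' : Fin m → ℝ} {a aσ aπ : Fin n → Fin m → ℝ}

lemma IsSGAllocT.share_eq (hT : IsSGAllocT q r σ T a) (i : Fin n) (j : Fin m) :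
    a i j = r i * consumptionTime (σ i) T j :=
  hT.2.1 i j

lemma IsSGAllocT.share_nonneg (hT : IsSGAllocT q r σ T a) {i : Fin n} (hr : 0 ≤ r i)
    (j : Fin m) : 0 ≤ a i j :=
  hT.share_eq i j ▸ mul_nonneg hr (consumptionTime_nonneg j)

lemma IsSGAllocT.share_le (hT : IsSGAllocT q r σ T a) {i : Fin n} (hr : 0 ≤ r i)
    (j : Fin m) : a i j ≤ r i * T j :=
  hT.share_eq i j ▸ mul_le_mul_of_nonneg_left (consumptionTime_le (hT.1 j).1) hr

lemma exists_share_lt_of_delay {i₀ : Fin n} (hr : ∀ i, 0 < r i) (hbig : ∀ i j, r i ≤ q j)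
    (hσ : ∀ i, i ≠ i₀ → σ i = π i) (hT : IsSGAllocT q r σ T aσ) (hT' : IsSGAllocT q r π T' aπ)
    {c : ℝ} (hdelay : ∃ h, T' h ≤ c ∧ T' h < T h) : ∃ j, T' j ≤ c ∧ aσ i₀ j < aπ i₀ j := by
  obtain ⟨j, D, hD, hjc, hjD, hbefore⟩ := exists_max_delay hdelay
  refine ⟨j, hjc, ?_⟩
  have hothers : ∀ i ∈ univ.erase i₀, aπ i j ≤ aσ i j ∧ (0 < aπ i j → aπ i j < aσ i j) := by
    intro i hi
    rw [hT.share_eq, hT'.share_eq, hσ i (ne_of_mem_erase hi)]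
    refine ⟨mul_le_mul_of_nonneg_left (consumptionTime_le_of_delay hD hjD hbefore) (hr i).le,
      fun hpos => mul_lt_mul_of_pos_left ?_ (hr i)⟩
    exact consumptionTime_lt_of_delay hD hjD hbefore (pos_of_mul_pos_right hpos (hr i).le)
  have hcolσ := add_sum_erase univ (fun i => aσ i j) (mem_univ i₀)
  have hcolπ := add_sum_erase univ (fun i => aπ i j) (mem_univ i₀)
  rw [hT.2.2] at hcolσ
  rw [hT'.2.2] at hcolπ
  -- some other agent consumes `j` in the truthful run: otherwise agent `i₀` alone would need
  -- time `q j / r i₀ ≥ 1` for it, but `T' j < T j ≤ 1`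
  obtain ⟨i, hi, hpos⟩ : ∃ i ∈ univ.erase i₀, 0 < aπ i j := by
    by_contra! hzero
    have hsum : ∑ i ∈ univ.erase i₀, aπ i j = 0 :=
      sum_eq_zero fun i hi => (hzero i hi).antisymm (hT'.share_nonneg (hr i).le j)
    have hT'j := mul_lt_mul_of_pos_left (show T' j < 1 by linarith [(hT.1 j).2]) (hr i₀)
    linarith [hbig i₀ j, hT'.share_le (hr i₀).le (i := i₀) j]
  have := sum_lt_sum (fun i hi => (hothers i hi).1) ⟨i, hi, (hothers i hi).2 hpos⟩
  linarith

end SG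

lemma exists_forall_lt_eq_and_ne {α γ : Type*} [LinearOrder α] [WellFoundedLT α] {f g : α → γ}
    (h : f ≠ g) : ∃ k, (∀ l < k, f l = g l) ∧ f k ≠ g k := by
  obtain ⟨k, hk, hmin⟩ := wellFounded_lt.has_min {l | f l ≠ g l} (Function.ne_iff.1 h)
  exact ⟨k, fun l hl => not_not.1 fun hne => hmin l hne hl, hk⟩

section FirstDifference

variable {n m : ℕ} {q : Fin m → ℝ} {r : Fin n → ℝ} {σ π : Fin n → Perm (Fin m)} {i₀ : Fin n}
  {T T' : Fin m → ℝ} {aσ aπ : Fin n → Fin m → ℝ} {k : Fin m}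

lemma exists_ge_share_lt_of_delay (hr : ∀ i, 0 < r i) (hbig : ∀ i j, r i ≤ q j)
    (hσ : ∀ i, i ≠ i₀ → σ i = π i) (hT : IsSGAllocT q r σ T aσ) (hT' : IsSGAllocT q r π T' aπ)
    (hagree : ∀ l < k, aσ i₀ (π i₀ l) = aπ i₀ (π i₀ l))
    {c : ℝ} (hdelay : ∃ h, T' h ≤ c ∧ T' h < T h) :
    ∃ l, k ≤ l ∧ T' (π i₀ l) ≤ c ∧ prefixMax (π i₀) T' l < T' (π i₀ l) ∧
      aσ i₀ (π i₀ l) < aπ i₀ (π i₀ l) := by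
  obtain ⟨j, hjc, hlt⟩ := exists_share_lt_of_delay hr hbig hσ hT hT' hdelay
  obtain ⟨l, rfl⟩ := (π i₀).surjective j
  have hpos : 0 < consumptionTime (π i₀) T' (π i₀ l) := by
    have := (hT.share_nonneg (hr i₀).le _).trans_lt hlt
    rw [hT'.share_eq] at this
    exact pos_of_mul_pos_right this (hr i₀).le
  refine ⟨l, not_lt.1 fun hl => (hagree l hl).not_lt hlt, hjc, ?_, hlt⟩
  simpa using prefixMax_lt_of_consumptionTime_pos hpos

lemma exhaustion_le_of_le_prefixMax (hr : ∀ i, 0 < r i) (hbig : ∀ i j, r i ≤ q j)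
    (hσ : ∀ i, i ≠ i₀ → σ i = π i) (hT : IsSGAllocT q r σ T aσ) (hT' : IsSGAllocT q r π T' aπ)
    (hagree : ∀ l < k, aσ i₀ (π i₀ l) = aπ i₀ (π i₀ l))
    {h : Fin m} (hh : T' h ≤ prefixMax (π i₀) T' k) : T h ≤ T' h := by
  by_contra! hlt
  obtain ⟨l, hkl, hlc, hl, -⟩ := exists_ge_share_lt_of_delay hr hbig hσ hT hT' hagree ⟨h, hh, hlt⟩
  linarith [prefixMax_mono (ρ := π i₀) (T := T') (show (k : ℕ) ≤ l from hkl)]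

lemma prefixMax_le_prefixMax_of_agree (hr : ∀ i, 0 < r i) (hbig : ∀ i j, r i ≤ q j)
    (hσ : ∀ i, i ≠ i₀ → σ i = π i) (hT : IsSGAllocT q r σ T aσ) (hT' : IsSGAllocT q r π T' aπ)
    (hagree : ∀ l < k, aσ i₀ (π i₀ l) = aπ i₀ (π i₀ l))
    {j : Fin m} (hkj : k ≤ (π i₀).symm j) (hpos : 0 < consumptionTime (σ i₀) T j) :
    prefixMax (π i₀) T' k ≤ prefixMax (σ i₀) T ((σ i₀).symm j) := by
  set P := univ.filter fun j => ((π i₀).symm j : ℕ) < k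
  have hP_agree : ∀ j ∈ P, consumptionTime (σ i₀) T j = consumptionTime (π i₀) T' j := by
    intro j hj
    have := hagree _ (mem_filter.1 hj).2
    rw [Equiv.apply_symm_apply, hT.share_eq, hT'.share_eq] at this
    exact mul_left_cancel₀ (hr i₀).ne' this
  refine le_prefixMax_of_consumptionTime_pos (P := P) (fun j hj => ?_) ?_
    (by simpa [P] using hkj) hpos
  · have hj' := le_prefixMax (T := T') (mem_filter.1 hj).2
    exact (exhaustion_le_of_le_prefixMax hr hbig hσ hT hT' hagree hj').trans hj'
  · rw [sum_congr rfl hP_agree, sum_filter_consumptionTime k.isLt.le]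

lemma share_le_of_agree (hr : ∀ i, 0 < r i) (hbig : ∀ i j, r i ≤ q j)
    (hσ : ∀ i, i ≠ i₀ → σ i = π i) (hT : IsSGAllocT q r σ T aσ) (hT' : IsSGAllocT q r π T' aπ)
    (hagree : ∀ l < k, aσ i₀ (π i₀ l) = aπ i₀ (π i₀ l)) :
    aσ i₀ (π i₀ k) ≤ aπ i₀ (π i₀ k) := by
  by_cases hdelay : ∃ h, T' h ≤ T' (π i₀ k) ∧ T' h < T h
  · obtain ⟨l, hkl, hlc, hl, hlt⟩ := exists_ge_share_lt_of_delay hr hbig hσ hT hT' hagree hdelay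
    obtain rfl : l = k := by
      by_contra hne
      have hk : T' (π i₀ k) ≤ prefixMax (π i₀) T' l :=
        le_prefixMax (by simpa using lt_of_le_of_ne hkl (Ne.symm hne))
      linarith
    exact hlt.le
  push Not at hdelay
  rw [hT.share_eq, hT'.share_eq]
  refine mul_le_mul_of_nonneg_left ?_ (hr i₀).le
  rcases (consumptionTime_nonneg (π i₀ k)).eq_or_lt with h0 | hpos
  · exact h0 ▸ consumptionTime_nonneg _
  have hstart := prefixMax_le_prefixMax_of_agree hr hbig hσ hT hT' hagree (by simp) hpos
  exact max_le_max_left 0 (sub_le_sub (hdelay _ le_rfl) (by simpa using hstart))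

end FirstDifference

theorem sg_strategyproof_general {n m : ℕ} (q : Fin m → ℝ) (r : Fin n → ℝ)
    (π σ : Fin n → Equiv.Perm (Fin m)) (i₀ : Fin n)
    (hr : ∀ i, 0 < r i)
    (hbig : ∀ i j, r i ≤ q j)
    (hσ : ∀ i, i ≠ i₀ → σ i = π i)
    (aπ aσ : Fin n → Fin m → ℝ)
    (hπ : IsSGAlloc q r π aπ)
    (hσa : IsSGAlloc q r σ aσ) :
    aσ i₀ = aπ i₀ ∨ LexPref (π i₀) (aπ i₀) (aσ i₀) := by
  obtain ⟨T', hT'⟩ := hπ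
  obtain ⟨T, hT⟩ := hσa
  rcases eq_or_ne (aσ i₀) (aπ i₀) with heq | hne
  · exact Or.inl heq
  obtain ⟨k, hagree, hk⟩ := exists_forall_lt_eq_and_ne (f := aσ i₀ ∘ π i₀) (g := aπ i₀ ∘ π i₀)
    fun h => hne ((π i₀).surjective.injective_comp_right h)
  exact Or.inr ⟨k, fun l hl => (hagree l hl).symm,
    (share_le_of_agree hr hbig hσ hT hT' hagree).lt_of_ne hk⟩

/-- Strategy-proofness of SG when `min_j q_j ≥ max_i r_i`: if all agents other
than `i₀` bid truthfully, then for any bid of agent `i₀`, she weakly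
lexicographic-prefers her truthful-bid allocation to her deviating one. -/
theorem sg_strategyproof {n m : ℕ} (q : Fin m → ℝ) (r : Fin n → ℝ)
    (π σ : Fin n → Equiv.Perm (Fin m)) (i₀ : Fin n)
    (hq : ∀ j, 0 < q j) (hr : ∀ i, 0 < r i) (hsum : ∑ i, r i = ∑ j, q j)
    (hbig : ∀ i j, r i ≤ q j)
    (hσ : ∀ i, i ≠ i₀ → σ i = π i)
    (aπ aσ : Fin n → Fin m → ℝ)
    (hAπ : IsAlloc q r aπ) (hπ : IsSGAlloc q r π aπ)
    (hAσ : IsAlloc q r aσ) (hσa : IsSGAlloc q r σ aσ) :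
    aσ i₀ = aπ i₀ ∨ LexPref (π i₀) (aπ i₀) (aσ i₀) :=
  sg_strategyproof_general q r π σ i₀ hr hbig hσ aπ aσ hπ hσa
end

section
/- The SG mechanism is group strategy-proof against any coalition S with min_j q_j ≥ Σ_{i∈S} r_i: if agents outside S bid truthfully, then for any bids of the agents in S producing allocation a^σ ≠ a^π, some agent i ∈ S strictly lexicographic-prefers a^π_{i*} to a^σ_{i*}. -/
open Finset

/-!
Call a good delayed if the manipulation makes it run out later, and let `x` be the delayed good
that runs out first in the truthful run. A truthful outsider who eats some `x` starts on it no
later and stops later, and some outsider does eat `x`, because the coalition cannot eat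
`q x ≥ ∑ i ∈ S, r i` before time `1`. As the total eaten of `x` is `q x`, some member of `S`
eats strictly less of `x`.

An agent eats the goods during disjoint time intervals inside `[0, max T]`, and a truthful
agent's intervals on any initial segment of her preference tile it. Hence if a member's share
improves lexicographically for her true preference, some good up to her first difference is
delayed. For the member who eats less of `x` that difference precedes `x`, so the delayed good
runs out before `x` in the truthful run, contradicting the choice of `x`. So no good is delayed
and no member's share changes; by the first argument with the runs exchanged no good runs out
earlier either, and the two runs coincide.
-/

section

variable {n m : ℕ}

section StartTime

variable (σ : Fin n → Equiv.Perm (Fin m)) (T : Fin m → ℝ) (i : Fin n)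

lemma startTime_nonneg (j : Fin m) : 0 ≤ startTime σ T i j :=
  (le_fold_max _).2 (Or.inl le_rfl)

variable {σ T i}

lemma le_startTime {j j' : Fin m} (h : (σ i).symm j' < (σ i).symm j) :
    T j' ≤ startTime σ T i j :=
  (le_fold_max _).2 (Or.inr ⟨j', by simpa using h, le_rfl⟩)

lemma startTime_le {j : Fin m} {c : ℝ} (hc : 0 ≤ c)
    (h : ∀ j', (σ i).symm j' < (σ i).symm j → T j' ≤ c) : startTime σ T i j ≤ c :=
  (fold_max_le _).2 ⟨hc, fun j' hj' => h j' (by simpa using hj')⟩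

lemma startTime_congr {τ : Fin n → Equiv.Perm (Fin m)} (h : σ i = τ i) :
    startTime σ T i = startTime τ T i := by
  funext j
  unfold startTime
  rw [h]

/-- The intervals `[startTime σ T i j, T j]`, `j ∈ G`, are disjoint and lie in `[0, max_G T]`. -/
lemma sum_max_sub_startTime_le (G : Finset (Fin m)) :
    ∑ j ∈ G, max 0 (T j - startTime σ T i j) ≤ G.fold max 0 T := by
  classical
  induction G using Finset.induction_on_max_value (σ i).symm with
  | empty => simp
  | insert a s ha hmax ih =>
    have hs : s.fold max 0 T ≤ startTime σ T i a :=
      (fold_max_le _).2 ⟨startTime_nonneg σ T i a, fun x hx =>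
        le_startTime ((hmax x hx).lt_of_ne fun h => ha ((σ i).symm.injective h ▸ hx))⟩
    have hstep : max 0 (T a - startTime σ T i a) ≤ max (T a) (s.fold max 0 T) - s.fold max 0 T :=
      max_le (sub_nonneg.2 (le_max_right _ _)) (by linarith [le_max_left (T a) (s.fold max 0 T)])
    rw [sum_insert ha, fold_insert ha]
    linarith

/-- On a set of goods closed under taking `σ i`-preferred goods these intervals tile
`[0, max_G T]`. -/
lemma sum_max_sub_startTime_eq {G : Finset (Fin m)}
    (hG : ∀ j ∈ G, ∀ j', (σ i).symm j' < (σ i).symm j → j' ∈ G) :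
    ∑ j ∈ G, max 0 (T j - startTime σ T i j) = G.fold max 0 T := by
  classical
  induction G using Finset.induction_on_max_value (σ i).symm with
  | empty => simp
  | insert a s ha hmax ih =>
    have hlt {x} (hx : x ∈ s) : (σ i).symm x < (σ i).symm a :=
      (hmax x hx).lt_of_ne fun h => ha ((σ i).symm.injective h ▸ hx)
    have hs : startTime σ T i a = s.fold max 0 T := by
      refine congrArg (fold max 0 T) (Finset.ext fun j' => ?_)
      simp only [mem_filter, mem_univ, true_and]
      refine ⟨fun h => ?_, hlt⟩
      exact (mem_insert.1 (hG a (mem_insert_self a s) j' h)).resolve_left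
        (by rintro rfl; exact h.false)
    have hs_lower : ∀ j ∈ s, ∀ j', (σ i).symm j' < (σ i).symm j → j' ∈ s := fun j hj j' h =>
      (mem_insert.1 (hG j (mem_insert_of_mem hj) j' h)).resolve_left
        (by rintro rfl; exact (h.trans (hlt hj)).false)
    rw [sum_insert ha, fold_insert ha, ih hs_lower, hs, ← max_add_add_right, zero_add,
      sub_add_cancel, max_comm]

end StartTime

section Runs

variable {q : Fin m → ℝ} {r : Fin n → ℝ} {σ : Fin n → Equiv.Perm (Fin m)} {T : Fin m → ℝ}
  {a : Fin n → Fin m → ℝ}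

lemma IsSGAllocT.nonneg (h : IsSGAllocT q r σ T a) {i : Fin n} (hr : 0 ≤ r i) (j : Fin m) :
    0 ≤ a i j := by
  rw [h.2.1]
  exact mul_nonneg hr (le_max_left _ _)

lemma IsSGAllocT.le_mul (h : IsSGAllocT q r σ T a) {i : Fin n} (hr : 0 ≤ r i) (j : Fin m) :
    a i j ≤ r i * T j := by
  rw [h.2.1]
  exact mul_le_mul_of_nonneg_left
    (max_le (h.1 j).1 (by linarith [startTime_nonneg σ T i j])) hr

lemma IsSGAllocT.startTime_lt (h : IsSGAllocT q r σ T a) {i : Fin n} {j : Fin m}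
    (hpos : 0 < a i j) : startTime σ T i j < T j := by
  by_contra! hle
  rw [h.2.1, max_eq_left (by linarith), mul_zero] at hpos
  exact hpos.false

/-- The coalition eats at most `(∑ i ∈ S, r i) * T x < q x` of `x`. -/
lemma IsSGAllocT.exists_notMem_pos (h : IsSGAllocT q r σ T a) {S : Finset (Fin n)} {x : Fin m}
    (hq : 0 < q x) (hr : ∀ i, 0 ≤ r i) (hbig : ∑ i ∈ S, r i ≤ q x) (hT : T x < 1) :
    ∃ i ∉ S, 0 < a i x := by
  classical
  by_contra! hout
  have hS : ∑ i ∈ S, a i x ≤ (∑ i ∈ S, r i) * T x := by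
    rw [sum_mul]
    exact sum_le_sum fun i _ => h.le_mul (hr i) x
  have hSc : ∑ i ∈ Sᶜ, a i x ≤ 0 := sum_nonpos fun i hi => hout i (mem_compl.1 hi)
  have hqT : (∑ i ∈ S, r i) * T x ≤ q x * T x :=
    mul_le_mul_of_nonneg_right hbig (h.1 x).1
  have hqT' : q x * T x < q x := mul_lt_of_lt_one_right hq hT
  have hsplit := sum_add_sum_compl S (fun i => a i x)
  rw [h.2.2 x] at hsplit
  linarith

end Runs

def IsFirstDelayed (T₁ T₂ : Fin m → ℝ) (x : Fin m) : Prop :=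
  T₁ x < T₂ x ∧ ∀ j, T₁ j < T₂ j → T₁ x ≤ T₁ j

lemma exists_isFirstDelayed {T₁ T₂ : Fin m → ℝ} (h : ∃ j, T₁ j < T₂ j) :
    ∃ x, IsFirstDelayed T₁ T₂ x :=
  let ⟨x, hx, hmin⟩ := Set.exists_min_image {j | T₁ j < T₂ j} T₁ (Set.toFinite _) h
  ⟨x, hx, hmin⟩

lemma startTime_le_of_isFirstDelayed {σ : Fin n → Equiv.Perm (Fin m)} {T₁ T₂ : Fin m → ℝ}
    {i : Fin n} {x : Fin m} (hx : IsFirstDelayed T₁ T₂ x) (hs : startTime σ T₁ i x < T₁ x) :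
    startTime σ T₂ i x ≤ startTime σ T₁ i x :=
  startTime_le (startTime_nonneg σ T₁ i x) fun j hj => by
    have hj₁ : T₁ j < T₁ x := (le_startTime hj).trans_lt hs
    have hj₂ : T₂ j ≤ T₁ j := not_lt.1 fun hd => (hx.2 j hd).not_gt hj₁
    exact hj₂.trans (le_startTime hj)

section Lex

variable {π : Equiv.Perm (Fin m)} {a b : Fin m → ℝ}

lemma lexPref_iff_toLex_lt : LexPref π a b ↔ toLex (b ∘ π) < toLex (a ∘ π) := by
  show _ ↔ Pi.Lex _ _ _ _
  exact exists_congr fun k => and_congr_left' (forall₂_congr fun l _ => eq_comm)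

lemma lexPref_of_not_lexPref_of_ne (hne : a ≠ b) (h : ¬LexPref π a b) : LexPref π b a := by
  rw [lexPref_iff_toLex_lt] at h ⊢
  refine (lt_or_gt_of_ne fun heq => hne (funext fun j => ?_)).resolve_right h
  simpa using congrFun heq (π.symm j)

lemma lt_symm_of_lexPref {k : Fin m} {x : Fin m} (hpre : ∀ l < k, b (π l) = a (π l))
    (hk : a (π k) < b (π k)) (hx : b x < a x) : k < π.symm x := by
  rcases lt_trichotomy k (π.symm x) with hkx | rfl | hxk
  · exact hkx
  · exact absurd (by simpa using hk) hx.asymm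
  · exact absurd (by simpa using hpre _ hxk) hx.ne

end Lex

section TwoRuns

variable {q : Fin m → ℝ} {r : Fin n → ℝ} {σ₁ σ₂ : Fin n → Equiv.Perm (Fin m)}
  {T₁ T₂ : Fin m → ℝ} {a₁ a₂ : Fin n → Fin m → ℝ}

/-- The agent starts on `x` no later in the second run, since the goods she ranks above `x`
are exhausted before `x` in the first run and so are not delayed; and `x` itself is delayed. -/
lemma IsSGAllocT.lt_of_isFirstDelayed (h₁ : IsSGAllocT q r σ₁ T₁ a₁)
    (h₂ : IsSGAllocT q r σ₂ T₂ a₂) {i : Fin n} {x : Fin m} (hσ : σ₁ i = σ₂ i) (hr : 0 < r i)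
    (hx : IsFirstDelayed T₁ T₂ x) (hpos : 0 < a₁ i x) : a₁ i x < a₂ i x := by
  have hs := h₁.startTime_lt hpos
  have hs₂ := startTime_le_of_isFirstDelayed (T₂ := T₂) hx hs
  rw [h₁.2.1, h₂.2.1, ← startTime_congr hσ, max_eq_right (by linarith)]
  exact mul_lt_mul_of_pos_left ((by linarith [hx.1] : _ < _).trans_le (le_max_right _ _)) hr

/-- Outsiders eat weakly more of `x`, one of them strictly more, while the total stays `q x`. -/
lemma IsSGAllocT.exists_mem_lt_of_isFirstDelayed (h₁ : IsSGAllocT q r σ₁ T₁ a₁)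
    (h₂ : IsSGAllocT q r σ₂ T₂ a₂) {S : Finset (Fin n)} (hσ : ∀ i ∉ S, σ₁ i = σ₂ i)
    (hq : ∀ j, 0 < q j) (hr : ∀ i, 0 < r i) (hbig : ∀ j, ∑ i ∈ S, r i ≤ q j) {x : Fin m}
    (hx : IsFirstDelayed T₁ T₂ x) : ∃ i ∈ S, a₂ i x < a₁ i x := by
  by_contra! hS
  obtain ⟨i₀, hi₀, hpos⟩ := h₁.exists_notMem_pos (hq x) (fun i => (hr i).le) (hbig x)
    (hx.1.trans_le (h₂.1 x).2)
  have hlt : ∑ i, a₁ i x < ∑ i, a₂ i x := by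
    refine sum_lt_sum (fun i _ => ?_)
      ⟨i₀, mem_univ _, h₁.lt_of_isFirstDelayed h₂ (hσ i₀ hi₀) (hr i₀) hx hpos⟩
    by_cases hi : i ∈ S
    · exact hS i hi
    rcases (h₁.nonneg (hr i).le x).eq_or_lt with h0 | h0
    · exact h0 ▸ h₂.nonneg (hr i).le x
    · exact (h₁.lt_of_isFirstDelayed h₂ (hσ i hi) (hr i) hx h0).le
  rw [h₁.2.2, h₂.2.2] at hlt
  exact hlt.false

/-- On her top `k + 1` goods (for the bid `σ₁ i`) agent `i` eats exactly `r i` times their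
latest exhaustion time in the first run, and at most `r i` times their latest exhaustion time in
the second run. -/
lemma IsSGAllocT.exists_delayed_of_lexPref (h₁ : IsSGAllocT q r σ₁ T₁ a₁)
    (h₂ : IsSGAllocT q r σ₂ T₂ a₂) {i : Fin n} (hr : 0 < r i) {k : Fin m}
    (hpre : ∀ l < k, a₂ i (σ₁ i l) = a₁ i (σ₁ i l)) (hk : a₁ i (σ₁ i k) < a₂ i (σ₁ i k)) :
    ∃ w, T₁ w ≤ ({j | (σ₁ i).symm j ≤ k} : Finset _).fold max 0 T₁ ∧
      ({j | (σ₁ i).symm j ≤ k} : Finset _).fold max 0 T₁ < T₂ w := by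
  set G : Finset (Fin m) := {j | (σ₁ i).symm j ≤ k}
  have hlower : ∀ j ∈ G, ∀ j', (σ₁ i).symm j' < (σ₁ i).symm j → j' ∈ G := fun j hj j' h => by
    simp only [G, mem_filter, mem_univ, true_and] at hj ⊢
    exact h.le.trans hj
  have hsum : ∑ j ∈ G, a₁ i j < ∑ j ∈ G, a₂ i j := by
    refine sum_lt_sum (fun j hj => ?_) ⟨σ₁ i k, by simp [G], hk⟩
    simp only [G, mem_filter, mem_univ, true_and] at hj
    rcases hj.lt_or_eq with hj | hj
    · simpa using (hpre _ hj).ge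
    · simpa [← hj] using hk.le
  have hfold : r i * G.fold max 0 T₁ < r i * G.fold max 0 T₂ :=
    calc r i * G.fold max 0 T₁ = ∑ j ∈ G, a₁ i j := by
          rw [← sum_max_sub_startTime_eq hlower, mul_sum]
          exact sum_congr rfl fun j _ => (h₁.2.1 i j).symm
      _ < ∑ j ∈ G, a₂ i j := hsum
      _ = r i * ∑ j ∈ G, max 0 (T₂ j - startTime σ₂ T₂ i j) := by
          rw [mul_sum]
          exact sum_congr rfl fun j _ => h₂.2.1 i j
      _ ≤ r i * G.fold max 0 T₂ := mul_le_mul_of_nonneg_left (sum_max_sub_startTime_le G) hr.le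
  obtain h0 | ⟨w, hw, hlt⟩ := (lt_fold_max _).1 (lt_of_mul_lt_mul_left hfold hr.le)
  · exact absurd h0 (not_lt.2 ((le_fold_max _).2 (Or.inl le_rfl)))
  · exact ⟨w, (le_fold_max _).2 (Or.inr ⟨w, hw, le_rfl⟩), hlt⟩

lemma IsSGAllocT.exists_delayed_before (h₁ : IsSGAllocT q r σ₁ T₁ a₁)
    (h₂ : IsSGAllocT q r σ₂ T₂ a₂) {i : Fin n} (hr : 0 < r i) {k x : Fin m}
    (hpre : ∀ l < k, a₂ i (σ₁ i l) = a₁ i (σ₁ i l)) (hk : a₁ i (σ₁ i k) < a₂ i (σ₁ i k))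
    (hx : a₂ i x < a₁ i x) : ∃ w, T₁ w < T₂ w ∧ T₁ w < T₁ x := by
  obtain ⟨w, hw, hlt⟩ := h₁.exists_delayed_of_lexPref h₂ hr hpre hk
  have hkx := lt_symm_of_lexPref hpre hk hx
  have hG : ({j | (σ₁ i).symm j ≤ k} : Finset _).fold max 0 T₁ ≤ startTime σ₁ T₁ i x :=
    (fold_max_le _).2 ⟨startTime_nonneg σ₁ T₁ i x, fun j hj =>
      le_startTime (lt_of_le_of_lt (by simpa using hj) hkx)⟩
  have hs := h₁.startTime_lt ((h₂.nonneg hr.le x).trans_lt hx)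
  exact ⟨w, hw.trans_lt hlt, by linarith⟩

end TwoRuns

end

theorem sg_group_strategyproof_general {n m : ℕ} (q : Fin m → ℝ) (r : Fin n → ℝ)
    (π σ : Fin n → Equiv.Perm (Fin m)) (S : Finset (Fin n))
    (hq : ∀ j, 0 < q j) (hr : ∀ i, 0 < r i)
    (hbig : ∀ j, ∑ i ∈ S, r i ≤ q j)
    (hσ : ∀ i ∉ S, σ i = π i)
    (aπ aσ : Fin n → Fin m → ℝ)
    (hπ : IsSGAlloc q r π aπ)
    (hσa : IsSGAlloc q r σ aσ)
    (hne : aσ ≠ aπ) :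
    ∃ i ∈ S, LexPref (π i) (aπ i) (aσ i) := by
  obtain ⟨P, hP⟩ := hπ
  obtain ⟨Q, hQ⟩ := hσa
  by_contra! hcon
  have hgain : ∀ i ∈ S, aσ i ≠ aπ i → LexPref (π i) (aσ i) (aπ i) := fun i hi hdiff =>
    lexPref_of_not_lexPref_of_ne (Ne.symm hdiff) (hcon i hi)
  have hnodelay : ∀ j, Q j ≤ P j := by
    by_contra! hdel
    obtain ⟨x, hx⟩ := exists_isFirstDelayed hdel
    obtain ⟨i, hi, hloss⟩ :=
      hP.exists_mem_lt_of_isFirstDelayed hQ (fun i hi => (hσ i hi).symm) hq hr hbig hx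
    obtain ⟨k, hpre, hk⟩ := hgain i hi fun h => hloss.ne (congrFun h x)
    obtain ⟨w, hw, hwx⟩ := hP.exists_delayed_before hQ (hr i) hpre hk hloss
    exact (hx.2 w hw).not_gt hwx
  have hS : ∀ i ∈ S, aσ i = aπ i := fun i hi => by
    by_contra hdiff
    obtain ⟨k, hpre, hk⟩ := hgain i hi hdiff
    obtain ⟨w, hw, hlt⟩ := hP.exists_delayed_of_lexPref hQ (hr i) hpre hk
    exact (hnodelay w).not_gt (hw.trans_lt hlt)
  have hQP : Q = P := funext fun j => (hnodelay j).antisymm <| not_lt.1 fun hj => by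
    obtain ⟨x, hx⟩ := exists_isFirstDelayed ⟨j, hj⟩
    obtain ⟨i, hi, hloss⟩ := hQ.exists_mem_lt_of_isFirstDelayed hP hσ hq hr hbig hx
    exact hloss.ne' (congrFun (hS i hi) x)
  refine hne (funext fun i => ?_)
  by_cases hi : i ∈ S
  · exact hS i hi
  · funext j
    rw [hQ.2.1, hP.2.1, hQP, startTime_congr (hσ i hi)]

/-- Group strategy-proofness of SG against a coalition `S` with
`min_j q_j ≥ ∑_{i ∈ S} r_i`: if agents outside `S` bid truthfully and the
resulting allocation differs from the truthful one, then some agent of `S`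
strictly lexicographic-prefers her truthful allocation. -/
theorem sg_group_strategyproof {n m : ℕ} (q : Fin m → ℝ) (r : Fin n → ℝ)
    (π σ : Fin n → Equiv.Perm (Fin m)) (S : Finset (Fin n))
    (hq : ∀ j, 0 < q j) (hr : ∀ i, 0 < r i) (hsum : ∑ i, r i = ∑ j, q j)
    (hbig : ∀ j, ∑ i ∈ S, r i ≤ q j)
    (hσ : ∀ i ∉ S, σ i = π i)
    (aπ aσ : Fin n → Fin m → ℝ)
    (hAπ : IsAlloc q r aπ) (hπ : IsSGAlloc q r π aπ)
    (hAσ : IsAlloc q r aσ) (hσa : IsSGAlloc q r σ aσ)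
    (hne : aσ ≠ aπ) :
    ∃ i ∈ S, LexPref (π i) (aπ i) (aσ i) :=
  sg_group_strategyproof_general q r π σ S hq hr hbig hσ aπ aσ hπ hσa hne
end

section
/- Timing monotonicity lemma: in the SG mechanism, suppose agent 1 deviates to bid σ_1 while all others bid truthfully, and let B be the most-preferred (by π_1) good that agent 1 receives positively under truth but requests later under σ_1 (the 'sacrificed' good). Then for every good D whose truthful exhaustion time satisfies T^π_D < T^π_B, the exhaustion time under the deviation satisfies T^σ_D ≤ T^π_D. -/
open Finset

private lemma fold_max_nonneg' {α : Type*} (s : Finset α) (f : α → ℝ) :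
    0 ≤ s.fold max 0 f := by
  induction s using Finset.cons_induction with
  | empty => simp
  | cons a s ha ih => rw [Finset.fold_cons]; exact le_max_of_le_right ih

private lemma le_fold_max' {α : Type*} {s : Finset α} (f : α → ℝ) {x : α} (hx : x ∈ s) :
    f x ≤ s.fold max 0 f := by
  induction s using Finset.cons_induction with
  | empty => simp at hx
  | cons a s ha ih =>
    rw [Finset.fold_cons]
    rcases Finset.mem_cons.mp hx with rfl | hx
    · exact le_max_left _ _
    · exact le_max_of_le_right (ih hx)

private lemma fold_max_le'' {α : Type*} {s : Finset α} {f : α → ℝ} {c : ℝ}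
    (hc : 0 ≤ c) (h : ∀ x ∈ s, f x ≤ c) : s.fold max 0 f ≤ c := by
  induction s using Finset.cons_induction with
  | empty => simpa
  | cons a s ha ih =>
    rw [Finset.fold_cons]
    exact max_le (h a (Finset.mem_cons_self _ _)) (ih fun x hx => h x (Finset.mem_cons_of_mem hx))

/-- Timing monotonicity lemma: if agent `i₀` deviates while others bid
truthfully, and `B` is the good she sacrifices (the `π i₀`-most-preferred good
received positively under truth but requested later under the deviation), then
every good `D` with `T^π_D < T^π_B` satisfies `T^σ_D ≤ T^π_D`. -/
theorem sg_timing_lemma {n m : ℕ} (q : Fin m → ℝ) (r : Fin n → ℝ)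
    (π σ : Fin n → Equiv.Perm (Fin m)) (i₀ : Fin n)
    (hq : ∀ j, 0 < q j) (hr : ∀ i, 0 < r i) (hsum : ∑ i, r i = ∑ j, q j)
    (hbig : ∀ i j, r i ≤ q j)
    (hσ : ∀ i, i ≠ i₀ → σ i = π i)
    (Tπ Tσ : Fin m → ℝ) (aπ aσ : Fin n → Fin m → ℝ)
    (hAπ : IsAlloc q r aπ) (hπ : IsSGAllocT q r π Tπ aπ)
    (hAσ : IsAlloc q r aσ) (hσa : IsSGAllocT q r σ Tσ aσ)
    (B : Fin m)
    -- agent `i₀` receives a positive amount of `B` under truthful bids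
    (hB1 : 0 < aπ i₀ B)
    -- `B` is requested later in `σ` than its position among the goods weakly
    -- `π i₀`-preferred to `B` that `i₀` receives positively under truth
    (hB2 : (Finset.univ.filter (fun j' => (π i₀).symm j' ≤ (π i₀).symm B ∧
              0 < aπ i₀ j')).card ≤ ((σ i₀).symm B : ℕ))
    -- `B` is the `π i₀`-most-preferred good with these properties
    (hB3 : ∀ j, 0 < aπ i₀ j →
        (Finset.univ.filter (fun j' => (π i₀).symm j' ≤ (π i₀).symm j ∧
              0 < aπ i₀ j')).card ≤ ((σ i₀).symm j : ℕ) →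
        (π i₀).symm B ≤ (π i₀).symm j) :
    ∀ D, Tπ D < Tπ B → Tσ D ≤ Tπ D := by
  obtain ⟨hπT, hπa, hπq⟩ := hπ
  obtain ⟨hσT, hσa', hσq⟩ := hσa
  obtain ⟨haπ0, -, -⟩ := hAπ
  obtain ⟨haσ0, -, -⟩ := hAσ
  -- small startTime API
  have hle_start : ∀ (τ : Fin n → Equiv.Perm (Fin m)) (T : Fin m → ℝ) (i : Fin n)
      (j j' : Fin m), (τ i).symm j' < (τ i).symm j → T j' ≤ startTime τ T i j :=
    fun τ T i j j' h => le_fold_max' T (mem_filter.mpr ⟨mem_univ _, h⟩)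
  have hstart_le : ∀ (τ : Fin n → Equiv.Perm (Fin m)) (T : Fin m → ℝ) (i : Fin n)
      (j : Fin m) (c : ℝ), 0 ≤ c → (∀ j', (τ i).symm j' < (τ i).symm j → T j' ≤ c) →
      startTime τ T i j ≤ c :=
    fun τ T i j c hc h => fold_max_le'' hc (fun x hx => h x (mem_filter.mp hx).2)
  have hstart_nonneg : ∀ (τ : Fin n → Equiv.Perm (Fin m)) (T : Fin m → ℝ) i j,
      0 ≤ startTime τ T i j := fun τ T i j => fold_max_nonneg' _ _
  -- positive consumption implies start before exhaustion
  have hstart : ∀ i j, 0 < aπ i j → startTime π Tπ i j < Tπ j := by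
    intro i j h
    rw [hπa i j] at h
    by_contra hle
    push_neg at hle
    rw [max_eq_left (by linarith), mul_zero] at h
    exact lt_irrefl 0 h
  suffices H : ∀ N, ∀ D : Fin m,
      (univ.filter fun j => Tπ j < Tπ D).card < N → Tπ D < Tπ B → Tσ D ≤ Tπ D by
    intro D hD
    exact H ((univ.filter fun j => Tπ j < Tπ D).card + 1) D (Nat.lt_succ_self _) hD
  intro N
  induction N with
  | zero => exact fun D h => absurd h (Nat.not_lt_zero _)
  | succ N IH =>
    intro D hcard hDB
    by_contra hcon
    push_neg at hcon
    -- induction hypothesis for strictly earlier goods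
    have IH' : ∀ j, Tπ j < Tπ D → Tσ j ≤ Tπ j := by
      intro j hj
      apply IH j _ (hj.trans hDB)
      have hsub : (univ.filter fun j' => Tπ j' < Tπ j) ⊂ (univ.filter fun j' => Tπ j' < Tπ D) := by
        constructor
        · intro x hx
          simp only [mem_filter, mem_univ, true_and] at hx ⊢
          exact hx.trans hj
        · intro hsub'
          have := hsub' (mem_filter.mpr ⟨mem_univ j, hj⟩)
          simp only [mem_filter, mem_univ, true_and] at this
          exact lt_irrefl _ this
      have := Finset.card_lt_card hsub
      omega
    -- key claim: start times can only move earlier for relevant agents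
    have key : ∀ i, 0 < aπ i D → startTime σ Tσ i D ≤ startTime π Tπ i D := by
      intro i hpos
      have hsπ := hstart i D hpos
      by_cases hi : i = i₀
      · subst hi
        -- D is strictly preferred to B
        have hDB' : (π i).symm D < (π i).symm B := by
          rcases lt_trichotomy ((π i).symm D) ((π i).symm B) with h | h | h
          · exact h
          · obtain rfl := (π i).symm.injective h
            exact absurd hDB (lt_irrefl _)
          · have hBle : Tπ B ≤ startTime π Tπ i D := hle_start π Tπ i D B h
            linarith
        set P : Finset (Fin m) :=
          univ.filter (fun j' => (π i).symm j' ≤ (π i).symm D ∧ 0 < aπ i j') with hPdef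
        have hDk : ((σ i).symm D : ℕ) < P.card := by
          by_contra hge
          push_neg at hge
          exact absurd (hB3 D hpos hge) (not_le.mpr hDB')
        have hP : ∀ j ∈ P, ((σ i).symm j : ℕ) < P.card := by
          intro j hj
          rw [hPdef, mem_filter] at hj
          obtain ⟨-, hje, hjpos⟩ := hj
          by_contra hge
          push_neg at hge
          have hPj : (univ.filter fun j' =>
              (π i).symm j' ≤ (π i).symm j ∧ 0 < aπ i j') ⊆ P := by
            intro x hx
            rw [mem_filter] at hx
            rw [hPdef, mem_filter]
            exact ⟨hx.1, hx.2.1.trans hje, hx.2.2⟩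
          have := hB3 j hjpos (le_trans (Finset.card_le_card hPj) hge)
          exact absurd (this.trans hje) (not_le.mpr hDB')
        have hinj : Set.InjOn (fun j => ((σ i).symm j : ℕ)) P := by
          intro a _ b _ h
          exact (σ i).symm.injective (Fin.val_injective h)
        have himg : P.image (fun j => ((σ i).symm j : ℕ)) = Finset.range P.card := by
          apply Finset.eq_of_subset_of_card_le
          · intro x hx
            obtain ⟨j, hj, rfl⟩ := Finset.mem_image.mp hx
            exact Finset.mem_range.mpr (hP j hj)
          · rw [Finset.card_range, Finset.card_image_of_injOn hinj]
        have hbefore : ∀ j', (σ i).symm j' < (σ i).symm D → j' ∈ P := by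
          intro j' hj'
          have hmem : ((σ i).symm j' : ℕ) ∈ Finset.range P.card :=
            Finset.mem_range.mpr (lt_trans hj' hDk)
          rw [← himg] at hmem
          obtain ⟨j'', hj'', heq⟩ := Finset.mem_image.mp hmem
          have : j'' = j' := (σ i).symm.injective (Fin.val_injective heq)
          rwa [← this]
        apply hstart_le σ Tσ i D _ (hstart_nonneg π Tπ i D)
        intro j' hj'
        have hj'P := hbefore j' hj'
        rw [hPdef, mem_filter] at hj'P
        obtain ⟨-, hj'e, -⟩ := hj'P
        have hne : j' ≠ D := by
          intro h
          subst h
          exact lt_irrefl _ hj'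
        have hj'lt : (π i).symm j' < (π i).symm D :=
          lt_of_le_of_ne hj'e (fun h => hne ((π i).symm.injective h))
        have h1 : Tπ j' ≤ startTime π Tπ i D := hle_start π Tπ i D j' hj'lt
        exact (IH' j' (lt_of_le_of_lt h1 hsπ)).trans h1
      · apply hstart_le σ Tσ i D _ (hstart_nonneg π Tπ i D)
        intro j' hj'
        rw [hσ i hi] at hj'
        have h1 : Tπ j' ≤ startTime π Tπ i D := hle_start π Tπ i D j' hj'
        exact (IH' j' (lt_of_le_of_lt h1 hsπ)).trans h1
    -- sum comparison
    have h1 : q D ≤ ∑ i, r i * max 0 (Tπ D - startTime σ Tσ i D) := by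
      rw [← hπq D]
      apply Finset.sum_le_sum
      intro i _
      rcases eq_or_lt_of_le (haπ0 i D) with h0 | hpos
      · rw [← h0]
        exact mul_nonneg (hr i).le (le_max_left _ _)
      · rw [hπa i D]
        have := key i hpos
        apply mul_le_mul_of_nonneg_left _ (hr i).le
        exact max_le_max le_rfl (by linarith)
    have hex : ∃ i, 0 < aσ i D := by
      by_contra hno
      push_neg at hno
      have hs : ∑ i, aσ i D ≤ 0 := Finset.sum_nonpos (fun i _ => hno i)
      rw [hσq D] at hs
      exact absurd (hq D) (not_lt.mpr hs)
    obtain ⟨i₁, hi₁⟩ := hex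
    have h2 : ∑ i, r i * max 0 (Tπ D - startTime σ Tσ i D) < q D := by
      rw [← hσq D]
      apply Finset.sum_lt_sum
      · intro i _
        rw [hσa' i D]
        apply mul_le_mul_of_nonneg_left _ (hr i).le
        exact max_le_max le_rfl (by linarith)
      · refine ⟨i₁, mem_univ _, ?_⟩
        rw [hσa' i₁ D]
        rw [hσa' i₁ D] at hi₁
        have hmax : 0 < max 0 (Tσ D - startTime σ Tσ i₁ D) := by
          by_contra h
          push_neg at h
          have : r i₁ * max 0 (Tσ D - startTime σ Tσ i₁ D) ≤ 0 :=
            mul_nonpos_of_nonneg_of_nonpos (hr i₁).le h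
          linarith
        have hX : 0 < Tσ D - startTime σ Tσ i₁ D := by
          rcases lt_max_iff.mp hmax with h | h
          · exact absurd h (lt_irrefl _)
          · exact h
        apply mul_lt_mul_of_pos_left _ (hr i₁)
        rw [max_eq_right hX.le]
        exact max_lt hX (by linarith)
    linarith
end

section
/- With m = 3 goods A, B, C each of quantity 1 and n = 2ℓ agents each of requirement 3/(2ℓ), where agents 1..ℓ have true preferences (A,B,C) and agents ℓ+1..2ℓ have preferences (B,C,A): under truthful bidding each of the first ℓ agents receives sorted allocation (1/ℓ, 0, 1/(2ℓ)), while if all of the first ℓ agents bid (B,A,C) and the rest bid truthfully, each lying agent receives the lexicographically better sorted allocation (1/ℓ, 1/(2ℓ), 0). Hence group strategy-proofness fails without the hypothesis min_j q_j ≥ Σ_{i∈S} r_i. -/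
open Finset

lemma startTime_refl {n : ℕ} (σ : Fin n → Equiv.Perm (Fin 3)) (T : Fin 3 → ℝ)
    (hT : ∀ j, 0 ≤ T j) (i : Fin n) (h : σ i = Equiv.refl (Fin 3)) :
    startTime σ T i 0 = 0 ∧ startTime σ T i 1 = T 0 ∧
      startTime σ T i 2 = max (T 0) (T 1) := by
  refine ⟨?_, ?_, ?_⟩ <;> rw [startTime, h]
  · rw [show (univ.filter (fun j' : Fin 3 => (Equiv.refl (Fin 3)).symm j' < (Equiv.refl (Fin 3)).symm 0)) = ∅ from by decide]; simp
  · rw [show (univ.filter (fun j' : Fin 3 => (Equiv.refl (Fin 3)).symm j' < (Equiv.refl (Fin 3)).symm 1)) = {0} from by decide]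
    simp [max_eq_left (hT 0)]
  · rw [show (univ.filter (fun j' : Fin 3 => (Equiv.refl (Fin 3)).symm j' < (Equiv.refl (Fin 3)).symm 2)) = {0,1} from by decide]
    simp [Finset.fold_insert, max_eq_left (hT 1)]

lemma startTime_rot {n : ℕ} (σ : Fin n → Equiv.Perm (Fin 3)) (T : Fin 3 → ℝ)
    (hT : ∀ j, 0 ≤ T j) (i : Fin n) (h : σ i = finRotate 3) :
    startTime σ T i 0 = max (T 1) (T 2) ∧ startTime σ T i 1 = 0 ∧
      startTime σ T i 2 = T 1 := by
  refine ⟨?_, ?_, ?_⟩ <;> rw [startTime, h]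
  · rw [show (univ.filter (fun j' : Fin 3 => (finRotate 3).symm j' < (finRotate 3).symm 0)) = {1,2} from by decide]
    simp [Finset.fold_insert, max_eq_left (hT 2)]
  · rw [show (univ.filter (fun j' : Fin 3 => (finRotate 3).symm j' < (finRotate 3).symm 1)) = ∅ from by decide]; simp
  · rw [show (univ.filter (fun j' : Fin 3 => (finRotate 3).symm j' < (finRotate 3).symm 2)) = {1} from by decide]
    simp [max_eq_left (hT 1)]

lemma startTime_swap {n : ℕ} (σ : Fin n → Equiv.Perm (Fin 3)) (T : Fin 3 → ℝ)
    (hT : ∀ j, 0 ≤ T j) (i : Fin n) (h : σ i = Equiv.swap 0 1) :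
    startTime σ T i 0 = T 1 ∧ startTime σ T i 1 = 0 ∧
      startTime σ T i 2 = max (T 0) (T 1) := by
  refine ⟨?_, ?_, ?_⟩ <;> rw [startTime, h]
  · rw [show (univ.filter (fun j' : Fin 3 => (Equiv.swap 0 1 : Equiv.Perm (Fin 3)).symm j' < (Equiv.swap 0 1 : Equiv.Perm (Fin 3)).symm 0)) = {1} from by decide]
    simp [max_eq_left (hT 1)]
  · rw [show (univ.filter (fun j' : Fin 3 => (Equiv.swap 0 1 : Equiv.Perm (Fin 3)).symm j' < (Equiv.swap 0 1 : Equiv.Perm (Fin 3)).symm 1)) = ∅ from by decide]; simp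
  · rw [show (univ.filter (fun j' : Fin 3 => (Equiv.swap 0 1 : Equiv.Perm (Fin 3)).symm j' < (Equiv.swap 0 1 : Equiv.Perm (Fin 3)).symm 2)) = {0,1} from by decide]
    simp [Finset.fold_insert, max_eq_left (hT 1)]

lemma sum_split (l : ℕ) (f : Fin (2 * l) → ℝ) (X Y : ℝ)
    (h : ∀ i : Fin (2 * l), f i = if (i : ℕ) < l then X else Y) :
    ∑ i, f i = l * X + l * Y := by
  have h1 : ∑ i, f i = ∑ i ∈ Finset.range (2 * l), (if i < l then X else Y) := by
    rw [← Fin.sum_univ_eq_sum_range]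
    exact Finset.sum_congr rfl fun i _ => h i
  rw [h1, Finset.range_eq_Ico, ← Finset.sum_Ico_consecutive _ (Nat.zero_le l) (by omega)]
  have h2 : ∑ i ∈ Finset.Ico 0 l, (if i < l then X else Y) = l * X := by
    rw [Finset.sum_congr rfl fun i hi => if_pos (Finset.mem_Ico.mp hi).2]
    simp [mul_comm]
  have h3 : ∑ i ∈ Finset.Ico l (2 * l), (if i < l then X else Y) = l * Y := by
    rw [Finset.sum_congr rfl fun i hi => if_neg (by have := (Finset.mem_Ico.mp hi).1; omega)]
    rw [Finset.sum_const, Nat.card_Ico, show 2 * l - l = l from by omega]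
    simp [nsmul_eq_mul]
  rw [h2, h3]

lemma max0_eq (x : ℝ) (h : max 0 x = 2/3) : x = 2/3 := by
  rcases le_total x 0 with h'|h'
  · rw [max_eq_left h'] at h; linarith
  · rwa [max_eq_right h'] at h

lemma solve_pi (t0 t1 t2 : ℝ) (h0 : 0 ≤ t0) (h0' : t0 ≤ 1) (h1 : 0 ≤ t1) (h1' : t1 ≤ 1)
    (h2 : 0 ≤ t2) (h2' : t2 ≤ 1)
    (e0 : max 0 t0 + max 0 (t0 - max t1 t2) = 2/3)
    (e1 : max 0 (t1 - t0) + max 0 t1 = 2/3)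
    (e2 : max 0 (t2 - max t0 t1) + max 0 (t2 - t1) = 2/3) :
    t0 = 2/3 ∧ t1 = 2/3 ∧ t2 = 1 := by
  rw [max_eq_right h0] at e0
  rw [max_eq_right h1] at e1
  have ht1 : t1 ≤ t0 := by
    by_contra hc
    push_neg at hc
    have hm : t0 - max t1 t2 ≤ 0 := by
      have := le_max_left t1 t2; linarith
    rw [max_eq_left hm] at e0
    rw [max_eq_right (by linarith : 0 ≤ t1 - t0)] at e1
    linarith
  rw [max_eq_left (by linarith : t1 - t0 ≤ 0)] at e1
  have ht1v : t1 = 2/3 := by linarith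
  have ht0v : t0 = 2/3 := by
    have hm : 0 ≤ max 0 (t0 - max t1 t2) := le_max_left _ _
    have := le_max_left t1 t2
    nlinarith [le_max_left (0:ℝ) (t0 - max t1 t2)]
  subst ht0v; subst ht1v
  rw [max_self] at e2
  have : max 0 (t2 - 2/3) = 1/3 := by linarith
  rcases le_total (t2 - 2/3) 0 with h'|h'
  · rw [max_eq_left h'] at this; linarith
  · rw [max_eq_right h'] at this
    exact ⟨rfl, rfl, by linarith⟩

lemma solve_sigma (t0 t1 t2 : ℝ) (h0 : 0 ≤ t0) (h0' : t0 ≤ 1) (h1 : 0 ≤ t1) (h1' : t1 ≤ 1)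
    (h2 : 0 ≤ t2) (h2' : t2 ≤ 1)
    (e0 : max 0 (t0 - t1) + max 0 (t0 - max t1 t2) = 2/3)
    (e1 : max 0 t1 + max 0 t1 = 2/3)
    (e2 : max 0 (t2 - max t0 t1) + max 0 (t2 - t1) = 2/3) :
    t0 = 1 ∧ t1 = 1/3 ∧ t2 = 1 := by
  rw [max_eq_right h1] at e1
  have ht1 : t1 = 1/3 := by linarith
  subst ht1
  have h02 : t0 = t2 := by
    rcases lt_trichotomy t0 t2 with h|h|h
    · exfalso
      have hm : t0 - max (1/3) t2 ≤ 0 := by have := le_max_right (1/3:ℝ) t2; linarith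
      rw [max_eq_left hm] at e0
      have := max0_eq (t0 - 1/3) (by linarith)
      linarith
    · exact h
    · exfalso
      have hm : t2 - max t0 (1/3) ≤ 0 := by have := le_max_left t0 (1/3:ℝ); linarith
      rw [max_eq_left hm] at e2
      have := max0_eq (t2 - 1/3) (by linarith)
      linarith
  subst h02
  have hm : t0 - max (1/3) t0 ≤ 0 := by have := le_max_right (1/3:ℝ) t0; linarith
  rw [max_eq_left hm] at e0
  have := max0_eq (t0 - 1/3) (by linarith)
  exact ⟨by linarith, rfl, by linarith⟩


lemma col_eq (l : ℕ) (hl : 0 < l) (a : Fin (2 * l) → Fin 3 → ℝ)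
    (σ : Fin (2 * l) → Equiv.Perm (Fin 3)) (T : Fin 3 → ℝ) (j : Fin 3) (sA sB : ℝ)
    (ha : ∀ i j, a i j = (3 / (2 * (l : ℝ))) * max 0 (T j - startTime σ T i j))
    (hs : ∑ i, a i j = 1)
    (h1 : ∀ i : Fin (2 * l), (i : ℕ) < l → startTime σ T i j = sA)
    (h2 : ∀ i : Fin (2 * l), ¬(i : ℕ) < l → startTime σ T i j = sB) :
    max 0 (T j - sA) + max 0 (T j - sB) = 2/3 := by
  have hlpos : (0:ℝ) < l := by exact_mod_cast hl
  have h32 : (l : ℝ) * (3 / (2 * (l : ℝ))) = 3/2 := by field_simp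
  have hx := sum_split l (fun i => a i j)
      ((3 / (2 * (l : ℝ))) * max 0 (T j - sA))
      ((3 / (2 * (l : ℝ))) * max 0 (T j - sB)) (by
    intro i
    by_cases hi : (i : ℕ) < l
    · beta_reduce
      rw [if_pos hi, ha i j, h1 i hi]
    · beta_reduce
      rw [if_neg hi, ha i j, h2 i hi])
  rw [hs] at hx
  have e1 : (l : ℝ) * ((3 / (2 * (l : ℝ))) * max 0 (T j - sA))
      = (3/2) * max 0 (T j - sA) := by rw [← mul_assoc, h32]
  have e2 : (l : ℝ) * ((3 / (2 * (l : ℝ))) * max 0 (T j - sB))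
      = (3/2) * max 0 (T j - sB) := by rw [← mul_assoc, h32]
  rw [e1, e2] at hx
  linarith

/-- Failure of group strategy-proofness without the hypothesis
`min_j q_j ≥ ∑_{i ∈ S} r_i`: with goods `A,B,C` of quantity 1 and `2ℓ` agents
of requirement `3/(2ℓ)`, the first `ℓ` agents preferring `(A,B,C)` and the rest
`(B,C,A)`, truthful bidding gives each of the first `ℓ` agents the sorted
allocation `(1/ℓ, 0, 1/(2ℓ))`, while if they all bid `(B,A,C)` each gets the
lexicographically better sorted allocation `(1/ℓ, 1/(2ℓ), 0)`. -/
theorem sg_not_group_strategyproof (l : ℕ) (hl : 0 < l)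
    (aπ aσ : Fin (2 * l) → Fin 3 → ℝ)
    (hπ : IsSGAlloc (fun _ => 1) (fun _ => 3 / (2 * (l : ℝ)))
      (fun i => if (i : ℕ) < l then Equiv.refl (Fin 3) else finRotate 3) aπ)
    (hσ : IsSGAlloc (fun _ => 1) (fun _ => 3 / (2 * (l : ℝ)))
      (fun i => if (i : ℕ) < l then Equiv.swap 0 1 else finRotate 3) aσ) :
    ∀ i : Fin (2 * l), (i : ℕ) < l →
      (∀ k, aπ i (Equiv.refl (Fin 3) k) =
        (![1 / (l : ℝ), 0, 1 / (2 * (l : ℝ))] : Fin 3 → ℝ) k) ∧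
      (∀ k, aσ i (Equiv.refl (Fin 3) k) =
        (![1 / (l : ℝ), 1 / (2 * (l : ℝ)), 0] : Fin 3 → ℝ) k) ∧
      LexPref (Equiv.refl (Fin 3)) (aσ i) (aπ i) := by
  obtain ⟨T, hTb, hTa, hTs⟩ := hπ
  obtain ⟨S, hSb, hSa, hSs⟩ := hσ
  have hlpos : (0:ℝ) < l := by exact_mod_cast hl
  have hlne : (l:ℝ) ≠ 0 := ne_of_gt hlpos
  have hT0 : ∀ j, 0 ≤ T j := fun j => (hTb j).1
  have hS0 : ∀ j, 0 ≤ S j := fun j => (hSb j).1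
  -- truthful equations
  have eπ0 := col_eq l hl aπ _ T 0 0 (max (T 1) (T 2)) hTa (hTs 0)
    (fun i hi => (startTime_refl _ T hT0 i (if_pos hi)).1)
    (fun i hi => (startTime_rot _ T hT0 i (if_neg hi)).1)
  have eπ1 := col_eq l hl aπ _ T 1 (T 0) 0 hTa (hTs 1)
    (fun i hi => (startTime_refl _ T hT0 i (if_pos hi)).2.1)
    (fun i hi => (startTime_rot _ T hT0 i (if_neg hi)).2.1)
  have eπ2 := col_eq l hl aπ _ T 2 (max (T 0) (T 1)) (T 1) hTa (hTs 2)
    (fun i hi => (startTime_refl _ T hT0 i (if_pos hi)).2.2)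
    (fun i hi => (startTime_rot _ T hT0 i (if_neg hi)).2.2)
  rw [sub_zero] at eπ0 eπ1
  obtain ⟨hT0v, hT1v, hT2v⟩ := solve_pi (T 0) (T 1) (T 2) (hTb 0).1 (hTb 0).2
    (hTb 1).1 (hTb 1).2 (hTb 2).1 (hTb 2).2 eπ0 eπ1 eπ2
  -- manipulation equations
  have eσ0 := col_eq l hl aσ _ S 0 (S 1) (max (S 1) (S 2)) hSa (hSs 0)
    (fun i hi => (startTime_swap _ S hS0 i (if_pos hi)).1)
    (fun i hi => (startTime_rot _ S hS0 i (if_neg hi)).1)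
  have eσ1 := col_eq l hl aσ _ S 1 0 0 hSa (hSs 1)
    (fun i hi => (startTime_swap _ S hS0 i (if_pos hi)).2.1)
    (fun i hi => (startTime_rot _ S hS0 i (if_neg hi)).2.1)
  have eσ2 := col_eq l hl aσ _ S 2 (max (S 0) (S 1)) (S 1) hSa (hSs 2)
    (fun i hi => (startTime_swap _ S hS0 i (if_pos hi)).2.2)
    (fun i hi => (startTime_rot _ S hS0 i (if_neg hi)).2.2)
  rw [sub_zero] at eσ1
  obtain ⟨hS0v, hS1v, hS2v⟩ := solve_sigma (S 0) (S 1) (S 2) (hSb 0).1 (hSb 0).2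
    (hSb 1).1 (hSb 1).2 (hSb 2).1 (hSb 2).2 eσ0 eσ1 eσ2
  intro i hi
  obtain ⟨sr0, sr1, sr2⟩ := startTime_refl
    (fun i : Fin (2 * l) => if (i : ℕ) < l then Equiv.refl (Fin 3) else finRotate 3)
    T hT0 i (if_pos hi)
  obtain ⟨sw0, sw1, sw2⟩ := startTime_swap
    (fun i : Fin (2 * l) => if (i : ℕ) < l then Equiv.swap 0 1 else finRotate 3)
    S hS0 i (if_pos hi)
  have v0 : aπ i 0 = 1 / (l : ℝ) := by
    rw [hTa i 0, sr0, hT0v, sub_zero, max_eq_right (by norm_num : (0:ℝ) ≤ 2/3)]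
    field_simp
  have v1 : aπ i 1 = 0 := by
    rw [hTa i 1, sr1, hT0v, hT1v]
    simp
  have v2 : aπ i 2 = 1 / (2 * (l : ℝ)) := by
    rw [hTa i 2, sr2, hT0v, hT1v, hT2v, max_self]
    rw [show (1:ℝ) - 2/3 = 1/3 from by norm_num,
      max_eq_right (by norm_num : (0:ℝ) ≤ 1/3)]
    field_simp
  have w0 : aσ i 0 = 1 / (l : ℝ) := by
    rw [hSa i 0, sw0, hS0v, hS1v]
    rw [show (1:ℝ) - 1/3 = 2/3 from by norm_num,
      max_eq_right (by norm_num : (0:ℝ) ≤ 2/3)]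
    field_simp
  have w1 : aσ i 1 = 1 / (2 * (l : ℝ)) := by
    rw [hSa i 1, sw1, hS1v, sub_zero, max_eq_right (by norm_num : (0:ℝ) ≤ 1/3)]
    field_simp
  have w2 : aσ i 2 = 0 := by
    rw [hSa i 2, sw2, hS0v, hS1v, hS2v]
    rw [show max (1:ℝ) (1/3) = 1 from by norm_num]
    simp
  refine ⟨?_, ?_, ?_⟩
  · intro k
    fin_cases k <;> simp [v0, v1, v2]
  · intro k
    fin_cases k <;> simp [w0, w1, w2]
  · refine ⟨1, ?_, ?_⟩
    · intro l' hl'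
      have hv : (l' : ℕ) = 0 := by
        have := hl'
        rw [Fin.lt_def] at this
        omega
      have : l' = 0 := Fin.ext hv
      subst this
      simp [v0, w0]
    · simp only [Equiv.refl_apply, v1, w1]
      exact div_pos one_pos (by linarith)
end

section
/- The extended SG mechanism with arbitrary speed functions produces a Pareto efficient allocation: for any nonnegative integrable speed functions η_i on [0,1] with ∫_0^1 η_i = r_i, the allocation produced under truthful bids is Pareto optimal with respect to lexicographic preferences. -/
open Finset

/-- The extended SG allocation with speed functions `η` and exhaustion times
`T` under bids `σ`: each agent consumes her most-preferred unexhausted good at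
time-varying rate `η i t` from time 0 to time 1; good `j` is exhausted at time
`T j`. -/
def IsExtSGAllocT {n m : ℕ} (q : Fin m → ℝ) (η : Fin n → ℝ → ℝ)
    (σ : Fin n → Equiv.Perm (Fin m)) (T : Fin m → ℝ)
    (a : Fin n → Fin m → ℝ) : Prop :=
  (∀ j, 0 ≤ T j ∧ T j ≤ 1) ∧
  (∀ i j, a i j = ∫ t in (min (startTime σ T i j) (T j))..(T j), η i t) ∧
  (∀ j, ∑ i, a i j = q j)

/-- `a` is produced by the extended SG mechanism with speeds `η` under bids `σ`. -/
def IsExtSGAlloc {n m : ℕ} (q : Fin m → ℝ) (η : Fin n → ℝ → ℝ)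
    (σ : Fin n → Equiv.Perm (Fin m)) (a : Fin n → Fin m → ℝ) : Prop :=
  ∃ T, IsExtSGAllocT q η σ T a

/-- The extended SG mechanism with arbitrary speed functions produces a Pareto
efficient allocation under truthful bids. -/
theorem extSG_pareto_efficient {n m : ℕ} (q : Fin m → ℝ) (r : Fin n → ℝ)
    (π : Fin n → Equiv.Perm (Fin m)) (η : Fin n → ℝ → ℝ)
    (hq : ∀ j, 0 < q j) (hr : ∀ i, 0 < r i) (hsum : ∑ i, r i = ∑ j, q j)
    (hηpos : ∀ i t, 0 ≤ η i t)
    (hηint : ∀ i, IntervalIntegrable (η i) MeasureTheory.volume 0 1)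
    (hηtot : ∀ i, ∫ t in (0:ℝ)..1, η i t = r i)
    (aπ : Fin n → Fin m → ℝ)
    (hA : IsAlloc q r aπ) (hSG : IsExtSGAlloc q η π aπ) :
    ∀ a, IsAlloc q r a → a ≠ aπ → ∃ i, LexPref (π i) (aπ i) (a i) := by
  intro a ha hne
  obtain ⟨T, hT, haf, hcol⟩ := hSG
  -- set of goods where the allocations differ
  set S : Finset (Fin m) := Finset.univ.filter (fun j => ∃ i, a i j ≠ aπ i j) with hS
  have hSne : S.Nonempty := by
    by_contra h
    apply hne
    funext i j
    by_contra hij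
    exact h ⟨j, by simp [hS, Finset.mem_filter]; exact ⟨i, hij⟩⟩
  obtain ⟨j₀, hj₀S, hj₀min⟩ := S.exists_min_image T hSne
  have hj₀ : ∃ i, a i j₀ ≠ aπ i j₀ := (Finset.mem_filter.mp hj₀S).2
  -- find an agent strictly losing good j₀
  have hsumeq : ∑ i, a i j₀ = ∑ i, aπ i j₀ := by rw [ha.2.2 j₀, hcol j₀]
  have hex : ∃ i, a i j₀ < aπ i j₀ := by
    by_contra h
    push_neg at h
    obtain ⟨i, hi⟩ := hj₀
    exact hi (((Finset.sum_eq_sum_iff_of_le (fun i _ => h i)).mp hsumeq.symm i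
      (Finset.mem_univ i)).symm)
  obtain ⟨i, hi⟩ := hex
  have hpos : 0 < aπ i j₀ := lt_of_le_of_lt (ha.1 i j₀) hi
  -- the start time of j₀ for i is strictly before T j₀
  have hstart : startTime π T i j₀ < T j₀ := by
    by_contra h
    push_neg at h
    have : min (startTime π T i j₀) (T j₀) = T j₀ := min_eq_right h
    rw [haf i j₀, this, intervalIntegral.integral_same] at hpos
    exact lt_irrefl 0 hpos
  -- goods preferred to j₀ are exhausted strictly before T j₀
  have hpref : ∀ l : Fin m, (π i).symm l < (π i).symm j₀ → T l < T j₀ := by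
    intro l hl
    have hmem : l ∈ Finset.univ.filter
        (fun j' => (π i).symm j' < (π i).symm j₀) := by
      simp [Finset.mem_filter, hl]
    have : T l ≤ startTime π T i j₀ :=
      (Finset.le_fold_max _).mpr (Or.inr ⟨l, hmem, le_refl _⟩)
    exact lt_of_le_of_lt this hstart
  -- hence on preferred goods, the allocations agree
  have heq : ∀ l : Fin m, (π i).symm l < (π i).symm j₀ → a i l = aπ i l := by
    intro l hl
    by_contra hne'
    have hlS : l ∈ S := by
      simp only [hS, Finset.mem_filter, Finset.mem_univ, true_and]
      exact ⟨i, hne'⟩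
    exact absurd (hj₀min l hlS) (not_le.mpr (hpref l hl))
  refine ⟨i, (π i).symm j₀, ?_, ?_⟩
  · intro l hl
    have := heq (π i l) (by simpa using hl)
    exact this.symm
  · simpa using hi
end

section
/- Second-welfare-type theorem: for every Pareto efficient allocation a (with respect to lexicographic preferences given true preference lists π), there exist nonnegative speed functions η_i on [0,1] with ∫_0^1 η_i(t) dt = r_i such that the extended SG mechanism with these speeds and truthful bids produces exactly the allocation a. -/
/-!
Say that good `j'` must be exhausted before `j` when some agent holding part of `j` strictly
prefers `j'`. For a Pareto efficient allocation this relation is acyclic: along a cycle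
`j₀ → j₁ → ⋯ → jₚ = j₀`, let the agent responsible for each step `jₖ → jₖ₊₁` give up a small
amount of `jₖ₊₁` in exchange for `jₖ`. The trades telescope around the cycle, so the allocation
stays feasible, and each agent involved gains on her most preferred good touched by the trades.

Hence there is a rank `τ` of the goods, increasing along the relation, with values below `m`.
Split `[0, 1]` into `m` slots and let good `j` be eaten during slot `τ j` only, by each agent `i`
at the rate delivering `a i j`. When agent `i` starts on `j`, all goods she prefers have been
exhausted, and every good she eats from then until `j` runs out is `j` itself.
-/

open Finset MeasureTheory

theorem Relation.TransGen.exists_seq {α : Type*} {R : α → α → Prop} {x y : α}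
    (h : Relation.TransGen R x y) :
    ∃ p, 1 ≤ p ∧ ∃ c : ℕ → α, c 0 = x ∧ c p = y ∧ ∀ k < p, R (c k) (c (k + 1)) := by
  induction h with
  | single hxy => exact ⟨1, le_rfl, fun k => if k = 0 then x else _, rfl, rfl, by simpa⟩
  | @tail _ z _ hbz ih =>
    obtain ⟨p, hp, c, hc0, hcp, hc⟩ := ih
    refine ⟨p + 1, by omega, fun k => if k ≤ p then c k else z, by simpa, by simp, ?_⟩
    intro k hk
    rcases (Nat.lt_succ_iff.mp hk).lt_or_eq with hk | rfl
    · simpa [hk.le, Nat.succ_le_of_lt hk] using hc k hk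
    · simpa [hcp] using hbz

theorem exists_rank_lt_card {α : Type*} [Fintype α] {R : α → α → Prop}
    (h : ∀ x, ¬ Relation.TransGen R x x) :
    ∃ τ : α → ℕ, (∀ x, τ x < Fintype.card α) ∧ ∀ x y, R x y → τ x < τ y := by
  classical
  refine ⟨fun x => #{y | Relation.TransGen R y x}, fun x => ?_, fun x y hxy => ?_⟩
  · exact card_lt_univ_of_notMem (x := x) (by simpa using h x)
  · refine card_lt_card ⟨fun z hz => ?_, fun hsub => h x ?_⟩
    · simp only [mem_filter, mem_univ, true_and] at hz ⊢
      exact hz.tail hxy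
    · simpa using hsub (by simpa using Relation.TransGen.single hxy)

/-- The most preferred of the goods `x k` gains, and no good before it changes. -/
theorem lexPref_add_exchange {m : ℕ} (π : Equiv.Perm (Fin m)) {κ : Type*} {s : Finset κ}
    (hs : s.Nonempty) {x y : κ → Fin m} (hxy : ∀ k ∈ s, π.symm (x k) < π.symm (y k))
    (v : Fin m → ℝ) {ε : ℝ} (hε : 0 < ε) :
    LexPref π (fun j => v j + ε * ∑ k ∈ s,
      ((if x k = j then 1 else 0) - (if y k = j then 1 else 0))) v := by
  obtain ⟨k₀, hk₀, hmin⟩ := s.exists_min_image (fun k => π.symm (x k)) hs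
  have hy : ∀ k ∈ s, ∀ j, π.symm j ≤ π.symm (x k₀) → y k ≠ j := fun k hk j hj hyk =>
    ((hmin k hk).trans_lt (hxy k hk)).not_ge (hyk ▸ hj)
  refine ⟨π.symm (x k₀), fun l hl => ?_, ?_⟩
  · have hx : ∀ k ∈ s, x k ≠ π l := fun k hk hxk =>
      (hmin k hk).not_gt (by simpa [hxk] using hl)
    have hy' : ∀ k ∈ s, y k ≠ π l := fun k hk => hy k hk _ (by simpa using hl.le)
    beta_reduce
    rw [sum_eq_zero fun k hk => by simp [hx k hk, hy' k hk], mul_zero, add_zero]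
  · beta_reduce
    rw [Equiv.apply_symm_apply]
    refine lt_add_of_pos_right _ (mul_pos hε (sum_pos' (fun k hk => ?_) ⟨k₀, hk₀, ?_⟩))
    · simp only [hy k hk _ le_rfl, if_false, sub_zero]
      positivity
    · simp [hy k₀ hk₀ _ le_rfl]

def cycleTrade {ι α : Type*} [DecidableEq ι] [DecidableEq α] (w : ℕ → ι) (c : ℕ → α) (p : ℕ)
    (i : ι) (j : α) : ℝ :=
  ∑ k ∈ range p with w k = i, ((if c k = j then 1 else 0) - (if c (k + 1) = j then 1 else 0))

section cycleTrade

variable {ι α : Type*} [DecidableEq ι] [DecidableEq α] {w : ℕ → ι} {c : ℕ → α} {p : ℕ}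

theorem sum_cycleTrade_right [Fintype α] (i : ι) : ∑ j, cycleTrade w c p i j = 0 := by
  unfold cycleTrade
  rw [sum_comm]
  exact sum_eq_zero fun k _ => by simp [sum_sub_distrib]

theorem sum_cycleTrade_left [Fintype ι] (hc : c p = c 0) (j : α) :
    ∑ i, cycleTrade w c p i j = 0 := by
  unfold cycleTrade
  rw [sum_fiberwise, sum_range_sub' (fun k => if c k = j then (1 : ℝ) else 0), hc, sub_self]

theorem cycleTrade_eq_zero {i : ι} (h : ∀ k < p, w k ≠ i) (j : α) : cycleTrade w c p i j = 0 :=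
  sum_eq_zero fun k hk => by
    rw [mem_filter, mem_range] at hk
    exact absurd hk.2 (h k hk.1)

theorem neg_le_cycleTrade (i : ι) (j : α) : -(p : ℝ) ≤ cycleTrade w c p i j := by
  have hterm : ∀ k, (-1 : ℝ) ≤ (if c k = j then 1 else 0) - (if c (k + 1) = j then 1 else 0) := by
    intro k
    split_ifs <;> norm_num
  calc -(p : ℝ) ≤ #{k ∈ range p | w k = i} • (-1 : ℝ) := by
        rw [nsmul_eq_mul, mul_neg_one, neg_le_neg_iff, Nat.cast_le]
        exact (card_filter_le _ _).trans (card_range p).le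
    _ ≤ cycleTrade w c p i j := card_nsmul_le_sum _ _ _ fun k _ => hterm k

theorem add_mul_cycleTrade_nonneg {a : ι → α → ℝ} (ha : ∀ i j, 0 ≤ a i j) {ε : ℝ} (hε : 0 ≤ ε)
    (hlarge : ∀ k < p, ε * p ≤ a (w k) (c (k + 1))) (i : ι) (j : α) :
    0 ≤ a i j + ε * cycleTrade w c p i j := by
  by_cases hout : ∃ k < p, w k = i ∧ c (k + 1) = j
  · obtain ⟨k, hk, rfl, rfl⟩ := hout
    nlinarith [hlarge k hk, neg_le_cycleTrade (w := w) (c := c) (p := p) (w k) (c (k + 1))]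
  · refine add_nonneg (ha i j) (mul_nonneg hε (sum_nonneg fun k hk => ?_))
    rw [mem_filter, mem_range] at hk
    rw [if_neg fun h => hout ⟨k, hk.1, hk.2, h⟩, sub_zero]
    positivity

end cycleTrade

def ExhaustBefore {n m : ℕ} (π : Fin n → Equiv.Perm (Fin m)) (a : Fin n → Fin m → ℝ)
    (j' j : Fin m) : Prop :=
  ∃ i, 0 < a i j ∧ (π i).symm j' < (π i).symm j

theorem not_transGen_exhaustBefore_self {n m : ℕ} {q : Fin m → ℝ} {r : Fin n → ℝ}
    {π : Fin n → Equiv.Perm (Fin m)} {a : Fin n → Fin m → ℝ} (hA : IsAlloc q r a)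
    (hPareto : ¬ ∃ b, IsAlloc q r b ∧
        (∀ i, b i = a i ∨ LexPref (π i) (b i) (a i)) ∧
        (∃ i, LexPref (π i) (b i) (a i))) (j : Fin m) :
    ¬ Relation.TransGen (ExhaustBefore π a) j j := by
  intro hcycle
  obtain ⟨p, hp, c, hc0, hcp, hc⟩ := hcycle.exists_seq
  have : Nonempty (Fin n) := ⟨(hc 0 hp).choose⟩
  choose! w hw using hc
  -- the same agent–good pair may be debited at up to `p` steps of the cycle
  obtain ⟨ε, hε, hlarge⟩ : ∃ ε > 0, ∀ k < p, ε * p ≤ a (w k) (c (k + 1)) := by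
    let δ := (range p).inf' (nonempty_range_iff.2 (by omega)) fun k => a (w k) (c (k + 1))
    have hδ : 0 < δ := (lt_inf'_iff _).2 fun k hk => (hw k (mem_range.1 hk)).1
    refine ⟨δ / p, by positivity, fun k hk => ?_⟩
    rw [div_mul_cancel₀ _ (by positivity)]
    exact inf'_le _ (mem_range.2 hk)
  have hlex : ∀ i, (∃ k < p, w k = i) →
      LexPref (π i) (fun j => a i j + ε * cycleTrade w c p i j) (a i) := by
    rintro i ⟨k, hk, rfl⟩
    refine lexPref_add_exchange _ ⟨k, by simp [hk]⟩ (fun k' hk' => ?_) _ hε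
    rw [mem_filter, mem_range] at hk'
    exact hk'.2 ▸ (hw k' hk'.1).2
  refine hPareto ⟨fun i j => a i j + ε * cycleTrade w c p i j,
    ⟨fun i j => add_mul_cycleTrade_nonneg hA.1 hε.le hlarge i j, fun i => ?_, fun j => ?_⟩,
    fun i => ?_, ⟨w 0, hlex _ ⟨0, hp, rfl⟩⟩⟩
  · rw [sum_add_distrib, ← mul_sum, sum_cycleTrade_right, mul_zero, add_zero, hA.2.1]
  · rw [sum_add_distrib, ← mul_sum, sum_cycleTrade_left (hcp.trans hc0.symm), mul_zero, add_zero,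
      hA.2.2]
  · by_cases hi : ∃ k < p, w k = i
    · exact Or.inr (hlex i hi)
    · push Not at hi
      exact Or.inl (funext fun j => by simp only [cycleTrade_eq_zero hi, mul_zero, add_zero])

theorem intervalIntegral_indicator_Ioc_const {x y α β : ℝ} (hxy : x ≤ y) (c : ℝ) :
    ∫ t in x..y, (Set.Ioc α β).indicator (fun _ => c) t = max (min y β - max x α) 0 * c := by
  rw [intervalIntegral.integral_of_le hxy, setIntegral_indicator measurableSet_Ioc,
    Set.Ioc_inter_Ioc, setIntegral_const, Real.volume_real_Ioc, smul_eq_mul]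

theorem intervalIntegral_indicator_slot {m : ℕ} (hm : 0 < m) {u v : ℕ} (huv : u ≤ v) (k : ℕ)
    (c : ℝ) :
    ∫ t in (u / m : ℝ)..(v / m), (Set.Ioc ((k : ℝ) / m) ((k + 1 : ℕ) / m)).indicator
      (fun _ => c) t = if u ≤ k ∧ k < v then c / m else 0 := by
  have hm' : (0 : ℝ) < m := by exact_mod_cast hm
  rw [intervalIntegral_indicator_Ioc_const (by gcongr), min_div_div_right hm'.le,
    max_div_div_right hm'.le, ← sub_div, ← Nat.cast_min, ← Nat.cast_max]
  split_ifs with h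
  · rw [min_eq_right (by omega), max_eq_right h.1]
    push_cast
    rw [add_sub_cancel_left, max_eq_left (by positivity)]
    ring
  · rw [max_eq_right, zero_mul]
    apply div_nonpos_of_nonpos_of_nonneg _ hm'.le
    rw [sub_nonpos, Nat.cast_le]
    omega

theorem integrable_indicator_Ioc_const (α β c : ℝ) :
    Integrable ((Set.Ioc α β).indicator fun _ => c) :=
  (integrable_indicator_iff measurableSet_Ioc).mpr (integrableOn_const measure_Ioc_lt_top.ne)

section SlotSchedule

variable {n m : ℕ} {π : Fin n → Equiv.Perm (Fin m)} {τ : Fin m → ℕ} {a : Fin n → Fin m → ℝ}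

noncomputable def slotSpeed (τ : Fin m → ℕ) (a : Fin n → Fin m → ℝ) (i : Fin n) (t : ℝ) : ℝ :=
  ∑ j, (Set.Ioc ((τ j : ℝ) / m) ((τ j + 1 : ℕ) / m)).indicator (fun _ => m * a i j) t

theorem slotSpeed_nonneg (ha : ∀ i j, 0 ≤ a i j) (i : Fin n) (t : ℝ) : 0 ≤ slotSpeed τ a i t :=
  sum_nonneg fun j _ => Set.indicator_nonneg (fun _ _ => mul_nonneg m.cast_nonneg (ha i j)) t

theorem integrable_slotSpeed (τ : Fin m → ℕ) (a : Fin n → Fin m → ℝ) (i : Fin n) :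
    Integrable (slotSpeed τ a i) :=
  integrable_finsetSum _ fun _ _ => integrable_indicator_Ioc_const ..

theorem integral_slotSpeed (hm : 0 < m) (i : Fin n) {u v : ℕ} (huv : u ≤ v) :
    ∫ t in (u / m : ℝ)..(v / m), slotSpeed τ a i t = ∑ j with u ≤ τ j ∧ τ j < v, a i j := by
  have hm' : (m : ℝ) ≠ 0 := by positivity
  unfold slotSpeed
  rw [intervalIntegral.integral_finsetSum fun _ _ =>
    (integrable_indicator_Ioc_const ..).intervalIntegrable, sum_filter]
  refine sum_congr rfl fun j _ => ?_
  rw [intervalIntegral_indicator_slot hm huv, mul_div_cancel_left₀ _ hm']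

theorem integral_slotSpeed_zero_one (hτ : ∀ j, τ j < m) (i : Fin n) :
    ∫ t in (0 : ℝ)..1, slotSpeed τ a i t = ∑ j, a i j := by
  rcases Nat.eq_zero_or_pos m with rfl | hm
  · simp [slotSpeed]
  · have := integral_slotSpeed (τ := τ) (a := a) hm i (Nat.zero_le m)
    rw [Nat.cast_zero, zero_div, div_self (by positivity)] at this
    rw [this, filter_true_of_mem fun j _ => ⟨Nat.zero_le _, hτ j⟩]

def startSlot (σ : Fin n → Equiv.Perm (Fin m)) (τ : Fin m → ℕ) (i : Fin n) (j : Fin m) : ℕ :=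
  (univ.filter fun j' => (σ i).symm j' < (σ i).symm j).sup fun j' => τ j' + 1

theorem startTime_slotEnd (σ : Fin n → Equiv.Perm (Fin m)) (τ : Fin m → ℕ) (i : Fin n)
    (j : Fin m) :
    startTime σ (fun j => ((τ j + 1 : ℕ) : ℝ) / m) i j = startSlot σ τ i j / m := by
  have := fold_hom (op := max) (b := 0) (f := fun j' => τ j' + 1)
    (s := univ.filter fun j' => (σ i).symm j' < (σ i).symm j) (op' := max)
    (m := fun x : ℕ => (x : ℝ) / m)
    fun x y => by rw [Nat.cast_max, max_div_div_right m.cast_nonneg]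
  rw [Nat.cast_zero, zero_div] at this
  exact this

theorem startSlot_le_of_pos (hτ : ∀ j' j, ExhaustBefore π a j' j → τ j' < τ j) {i : Fin n}
    {j : Fin m} (h : 0 < a i j) : startSlot π τ i j ≤ τ j :=
  Finset.sup_le fun j' hj' => hτ j' j ⟨i, h, (mem_filter.mp hj').2⟩

theorem eq_of_startSlot_le (hτ : ∀ j' j, ExhaustBefore π a j' j → τ j' < τ j) {i : Fin n}
    {j j' : Fin m} (h : 0 < a i j') (h₁ : startSlot π τ i j ≤ τ j') (h₂ : τ j' ≤ τ j) :
    j' = j := by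
  by_contra hne
  rcases lt_or_gt_of_ne ((π i).symm.injective.ne hne) with hlt | hlt
  · have : τ j' + 1 ≤ startSlot π τ i j :=
      le_sup (f := fun j' => τ j' + 1) (mem_filter.mpr ⟨mem_univ _, hlt⟩)
    omega
  · have := hτ j j' ⟨i, h, hlt⟩
    omega

theorem isExtSGAlloc_slotSpeed {q : Fin m → ℝ} (ha : ∀ i j, 0 ≤ a i j)
    (hcol : ∀ j, ∑ i, a i j = q j) (hτm : ∀ j, τ j < m)
    (hτ : ∀ j' j, ExhaustBefore π a j' j → τ j' < τ j) : IsExtSGAlloc q (slotSpeed τ a) π a := by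
  refine ⟨fun j => ((τ j + 1 : ℕ) : ℝ) / m, fun j => ⟨by positivity,
    div_le_one_of_le₀ (by exact_mod_cast hτm j) m.cast_nonneg⟩, fun i j => ?_, hcol⟩
  have hm : 0 < m := j.pos
  rw [startTime_slotEnd]
  by_cases hs : startSlot π τ i j ≤ τ j
  · have hle : (startSlot π τ i j : ℝ) / m ≤ ((τ j + 1 : ℕ) : ℝ) / m := by gcongr; omega
    rw [min_eq_left hle, integral_slotSpeed hm i (by omega),
      sum_eq_single_of_mem j (by simp [hs])]
    intro j' hj' hne
    by_contra h
    rw [mem_filter] at hj'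
    exact hne (eq_of_startSlot_le hτ ((ha i j').lt_of_ne' h) hj'.2.1 (by omega))
  · have hle : ((τ j + 1 : ℕ) : ℝ) / m ≤ startSlot π τ i j / m := by gcongr; omega
    rw [min_eq_right hle, intervalIntegral.integral_same]
    exact le_antisymm (not_lt.mp fun h => hs (startSlot_le_of_pos hτ h)) (ha i j)

end SlotSchedule

theorem extSG_second_welfare_general {n m : ℕ} (q : Fin m → ℝ) (r : Fin n → ℝ)
    (π : Fin n → Equiv.Perm (Fin m))
    (a : Fin n → Fin m → ℝ) (hA : IsAlloc q r a)
    (hPareto : ¬ ∃ b, IsAlloc q r b ∧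
        (∀ i, b i = a i ∨ LexPref (π i) (b i) (a i)) ∧
        (∃ i, LexPref (π i) (b i) (a i))) :
    ∃ η : Fin n → ℝ → ℝ,
      (∀ i t, 0 ≤ η i t) ∧
      (∀ i, IntervalIntegrable (η i) MeasureTheory.volume 0 1) ∧
      (∀ i, ∫ t in (0:ℝ)..1, η i t = r i) ∧
      IsExtSGAlloc q η π a := by
  obtain ⟨τ, hτm, hτ⟩ := exists_rank_lt_card (not_transGen_exhaustBefore_self hA hPareto)
  rw [Fintype.card_fin] at hτm
  refine ⟨slotSpeed τ a, slotSpeed_nonneg hA.1,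
    fun i => (integrable_slotSpeed τ a i).intervalIntegrable, fun i => ?_,
    isExtSGAlloc_slotSpeed hA.1 hA.2.2 hτm hτ⟩
  rw [integral_slotSpeed_zero_one hτm, hA.2.1]

/-- Second-welfare-type theorem: every Pareto efficient allocation (w.r.t.
lexicographic preferences) is produced by the extended SG mechanism for some
choice of nonnegative speed functions integrating to the requirements. -/
theorem extSG_second_welfare {n m : ℕ} (q : Fin m → ℝ) (r : Fin n → ℝ)
    (π : Fin n → Equiv.Perm (Fin m))
    (hq : ∀ j, 0 < q j) (hr : ∀ i, 0 < r i) (hsum : ∑ i, r i = ∑ j, q j)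
    (a : Fin n → Fin m → ℝ) (hA : IsAlloc q r a)
    (hPareto : ¬ ∃ b, IsAlloc q r b ∧
        (∀ i, b i = a i ∨ LexPref (π i) (b i) (a i)) ∧
        (∃ i, LexPref (π i) (b i) (a i))) :
    ∃ η : Fin n → ℝ → ℝ,
      (∀ i t, 0 ≤ η i t) ∧
      (∀ i, IntervalIntegrable (η i) MeasureTheory.volume 0 1) ∧
      (∀ i, ∫ t in (0:ℝ)..1, η i t = r i) ∧
      IsExtSGAlloc q η π a :=
  extSG_second_welfare_general q r π a hA hPareto
end

section
/- If an allocation a is not Pareto efficient in the lexicographic sense, then the greedy sequential-filling procedure certifies this: there exists a partial allocation α dominated coordinatewise appropriately by a, a nonempty set S_1 of agents each of whom can be given a small positive amount ε of her most-preferred good with remaining supply, producing a new allocation that every agent of S_1 strictly lexicographic-prefers and that is unchanged for all other agents. Conversely, if no such improving step exists at any reachable partial allocation, a is Pareto efficient. -/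
open Finset

/-- A partial allocation: nonnegative, row sums at most `r i`, column sums at
most `q j`. -/
def IsPartialAlloc {n m : ℕ} (q : Fin m → ℝ) (r : Fin n → ℝ)
    (α : Fin n → Fin m → ℝ) : Prop :=
  (∀ i j, 0 ≤ α i j) ∧ (∀ i, ∑ j, α i j ≤ r i) ∧ (∀ j, ∑ i, α i j ≤ q j)

/-- `a` is Pareto efficient w.r.t. lexicographic preferences. -/
def ParetoEff {n m : ℕ} (q : Fin m → ℝ) (r : Fin n → ℝ)
    (π : Fin n → Equiv.Perm (Fin m)) (a : Fin n → Fin m → ℝ) : Prop :=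
  ¬ ∃ b, IsAlloc q r b ∧ (∀ i, b i = a i ∨ LexPref (π i) (b i) (a i)) ∧
    (∃ i, LexPref (π i) (b i) (a i))

/-- The witness in a `LexPref` statement (the first coordinate where the two
shares differ) is unique. -/
lemma lex_witness_unique {m : ℕ} (π : Equiv.Perm (Fin m)) (x y : Fin m → ℝ)
    {k k' : Fin m}
    (h1 : ∀ l, l < k → x (π l) = y (π l)) (h2 : y (π k) < x (π k))
    (h1' : ∀ l, l < k' → x (π l) = y (π l)) (h2' : y (π k') < x (π k')) :
    k = k' := by
  rcases lt_trichotomy k k' with h | h | h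
  · exact absurd (h1' k h) (ne_of_gt h2)
  · exact h
  · exact absurd (h1 k' h) (ne_of_gt h2')

lemma lexPref_ne {m : ℕ} {π : Equiv.Perm (Fin m)} {x y : Fin m → ℝ}
    (h : LexPref π x y) : x ≠ y := by
  obtain ⟨k, _, h2⟩ := h
  intro he
  rw [he] at h2
  exact lt_irrefl _ h2

/-- Rank of the first difference between shares `x` and `y` (as seen by
preference order `π`), or `m` if they coincide. -/
noncomputable def rk {m : ℕ} (π : Equiv.Perm (Fin m)) (x y : Fin m → ℝ) : ℕ :=
  letI := Classical.dec (LexPref π x y)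
  if h : LexPref π x y then (Classical.choose h : Fin m).1 else m

lemma rk_eq {m : ℕ} {π : Equiv.Perm (Fin m)} {x y : Fin m → ℝ} {w : Fin m}
    (h1 : ∀ l, l < w → x (π l) = y (π l)) (h2 : y (π w) < x (π w)) :
    rk π x y = w.1 := by
  have hL : LexPref π x y := ⟨w, h1, h2⟩
  rw [rk]
  rw [dif_pos hL]
  obtain ⟨g1, g2⟩ := Classical.choose_spec hL
  exact congrArg Fin.val (lex_witness_unique π x y g1 g2 h1 h2)

lemma sum_pair_ite {ι : Type*} [Fintype ι] [DecidableEq ι] {j g : ι}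
    (h : j ≠ g) (c d : ℝ) :
    ∑ y : ι, (if y = j then c else if y = g then d else 0) = c + d := by
  have he : ∀ y : ι, (if y = j then c else if y = g then d else 0)
      = (if y = j then c else 0) + (if y = g then d else 0) := by
    intro y
    by_cases h1 : y = j
    · subst h1; simp [h]
    · by_cases h2 : y = g <;> simp [h1, h2, Ne.symm h]
  rw [Finset.sum_congr rfl (fun y _ => he y), Finset.sum_add_distrib,
    Finset.sum_ite_eq' univ j (fun _ => c), Finset.sum_ite_eq' univ g (fun _ => d)]
  simp

/-- Key exchange lemma: if `b` is a lexicographic Pareto improvement of `a`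
minimizing the total rank of first improvements, then no agent `k` holds, under
`b`, more than under `a` of a good strictly preferred (by an improved agent `i`)
to `i`'s first improved good. -/
lemma no_transfer {n m : ℕ} (q : Fin m → ℝ) (r : Fin n → ℝ)
    (π : Fin n → Equiv.Perm (Fin m)) (a : Fin n → Fin m → ℝ)
    (hA : IsAlloc q r a)
    (b : Fin n → Fin m → ℝ) (hbA : IsAlloc q r b)
    (hbDom : ∀ i, b i = a i ∨ LexPref (π i) (b i) (a i))
    (hmin : ∀ b', IsAlloc q r b' →
      (∀ i, b' i = a i ∨ LexPref (π i) (b' i) (a i)) →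
      (∃ i, LexPref (π i) (b' i) (a i)) →
      ∑ x, rk (π x) (b x) (a x) ≤ ∑ x, rk (π x) (b' x) (a x))
    (i : Fin n) (w l : Fin m)
    (h1 : ∀ l', l' < w → b i (π i l') = a i (π i l'))
    (h2 : a i (π i w) < b i (π i w))
    (hlw : l < w) (k : Fin n) : b k (π i l) ≤ a k (π i l) := by
  classical
  by_contra hcon
  push_neg at hcon
  set j' := π i l with hj'def
  set gi := π i w with hgidef
  have hij' : b i j' = a i j' := h1 l hlw
  have hki : k ≠ i := by
    intro h; rw [h] at hcon; exact absurd hij' (ne_of_gt hcon)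
  have hj'gi : j' ≠ gi := by
    intro h
    exact absurd ((π i).injective h) (ne_of_lt hlw)
  have hbk : b k ≠ a k := by
    intro h; rw [h] at hcon; exact lt_irrefl _ hcon
  obtain ⟨wk, hk1, hk2⟩ := (hbDom k).resolve_left hbk
  have hwk_le : wk ≤ (π k).symm j' := by
    by_contra h
    push_neg at h
    have := hk1 _ h
    rw [Equiv.apply_symm_apply] at this
    exact (ne_of_gt hcon) this
  -- choose the transfer amount
  set A := b k j' - a k j' with hAdef
  set B := b i gi - a i gi with hBdef
  have hA0 : 0 < A := by simp [hAdef]; linarith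
  have hB0 : 0 < B := by simp [hBdef]; linarith
  set δ := min A B / 2 with hδdef
  have hδ0 : 0 < δ := half_pos (lt_min hA0 hB0)
  have hδA : δ < A := by
    have := min_le_left A B; rw [hδdef]; linarith
  have hδB : δ < B := by
    have := min_le_right A B; rw [hδdef]; linarith
  -- the perturbed allocation
  set b' : Fin n → Fin m → ℝ := fun x y => b x y +
    (if x = i then (if y = j' then δ else if y = gi then -δ else 0)
     else if x = k then (if y = j' then -δ else if y = gi then δ else 0)
     else 0) with hb'def
  have hb'ij : b' i j' = b i j' + δ := by simp [hb'def]
  have hb'igi : b' i gi = b i gi - δ := by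
    simp [hb'def, Ne.symm hj'gi, sub_eq_add_neg]
  have hb'kj : b' k j' = b k j' - δ := by
    simp [hb'def, hki, sub_eq_add_neg]
  have hb'kgi : b' k gi = b k gi + δ := by
    simp [hb'def, hki, Ne.symm hj'gi]
  have hb'row : ∀ x, x ≠ i → x ≠ k → b' x = b x := by
    intro x hx1 hx2; funext y; simp [hb'def, hx1, hx2]
  have hb'other : ∀ x y, y ≠ j' → y ≠ gi → b' x y = b x y := by
    intro x y hy1 hy2; simp [hb'def, hy1, hy2]
  -- b' is an allocation
  have hb'A : IsAlloc q r b' := by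
    refine ⟨?_, ?_, ?_⟩
    · intro x y
      by_cases hx1 : x = i
      · subst hx1
        by_cases hy1 : y = j'
        · subst hy1; rw [hb'ij]; have := hbA.1 x j'; linarith
        · by_cases hy2 : y = gi
          · subst hy2
            rw [hb'igi]
            have := hA.1 x gi
            simp [hBdef] at hδB
            linarith
          · rw [hb'other x y hy1 hy2]; exact hbA.1 x y
      · by_cases hx2 : x = k
        · subst hx2
          by_cases hy1 : y = j'
          · subst hy1
            rw [hb'kj]
            have := hA.1 x j'
            simp [hAdef] at hδA
            linarith
          · by_cases hy2 : y = gi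
            · subst hy2; rw [hb'kgi]; have := hbA.1 x gi; linarith
            · rw [hb'other x y hy1 hy2]; exact hbA.1 x y
        · rw [hb'row x hx1 hx2]; exact hbA.1 x y
    · intro x
      by_cases hx1 : x = i
      · subst hx1
        have : ∑ y, b' x y = ∑ y, b x y +
            ∑ y, (if y = j' then δ else if y = gi then -δ else 0) := by
          rw [← Finset.sum_add_distrib]
          refine Finset.sum_congr rfl fun y _ => ?_
          simp [hb'def]
        rw [this, sum_pair_ite hj'gi δ (-δ), hbA.2.1 x]
        ring
      · by_cases hx2 : x = k
        · subst hx2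
          have : ∑ y, b' x y = ∑ y, b x y +
              ∑ y, (if y = j' then -δ else if y = gi then δ else 0) := by
            rw [← Finset.sum_add_distrib]
            refine Finset.sum_congr rfl fun y _ => ?_
            simp [hb'def, hki]
          rw [this, sum_pair_ite hj'gi (-δ) δ, hbA.2.1 x]
          ring
        · rw [hb'row x hx1 hx2]; exact hbA.2.1 x
    · intro y
      have hik : i ≠ k := Ne.symm hki
      have : ∑ x, b' x y = ∑ x, b x y +
          ∑ x, (if x = i then (if y = j' then δ else if y = gi then -δ else 0)
            else if x = k then (if y = j' then -δ else if y = gi then δ else 0)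
            else 0) := by
        rw [← Finset.sum_add_distrib]
      rw [this, sum_pair_ite hik]
      have hz : (if y = j' then δ else if y = gi then -δ else 0)
          + (if y = j' then -δ else if y = gi then δ else 0) = 0 := by
        by_cases hy1 : y = j'
        · simp [hy1]
        · by_cases hy2 : y = gi <;> simp [hy1, hy2, Ne.symm hj'gi]
      rw [hz, add_zero]
      exact hbA.2.2 y
  -- agent i strictly improves at rank l under b'
  have hli1 : ∀ l', l' < l → b' i (π i l') = a i (π i l') := by
    intro l' hl'
    have hne1 : π i l' ≠ j' := by
      intro h; exact absurd ((π i).injective h) (ne_of_lt hl')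
    have hne2 : π i l' ≠ gi := by
      intro h; exact absurd ((π i).injective h) (ne_of_lt (hl'.trans hlw))
    rw [hb'other i _ hne1 hne2]
    exact h1 l' (hl'.trans hlw)
  have hli2 : a i (π i l) < b' i (π i l) := by
    rw [← hj'def, hb'ij, hij']
    linarith
  have hLi : LexPref (π i) (b' i) (a i) := ⟨l, hli1, hli2⟩
  -- agent k still weakly improves, with rank not larger
  have hk' : ∃ wk' : Fin m, (∀ l', l' < wk' → b' k (π k l') = a k (π k l')) ∧
      a k (π k wk') < b' k (π k wk') ∧ wk' ≤ wk := by
    set t := (π k).symm gi with htdef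
    by_cases ht : t < wk
    · refine ⟨t, ?_, ?_, le_of_lt ht⟩
      · intro l' hl'
        have hne2 : π k l' ≠ gi := by
          intro h
          have : l' = t := by rw [htdef, ← h, Equiv.symm_apply_apply]
          exact absurd this (ne_of_lt hl')
        have hne1 : π k l' ≠ j' := by
          intro h
          have : l' = (π k).symm j' := by rw [← h, Equiv.symm_apply_apply]
          have hge : wk ≤ l' := this ▸ hwk_le
          exact absurd (lt_of_lt_of_le (hl'.trans ht) hge) (lt_irrefl _)
        rw [hb'other k _ hne1 hne2]
        exact hk1 l' (hl'.trans ht)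
      · have hpt : π k t = gi := Equiv.apply_symm_apply _ _
        rw [hpt, hb'kgi]
        have := hk1 t ht
        rw [hpt] at this
        linarith
    · push_neg at ht
      refine ⟨wk, ?_, ?_, le_refl _⟩
      · intro l' hl'
        have hne2 : π k l' ≠ gi := by
          intro h
          have : l' = t := by rw [htdef, ← h, Equiv.symm_apply_apply]
          exact absurd (this ▸ hl') (not_lt.mpr ht)
        have hne1 : π k l' ≠ j' := by
          intro h
          have : l' = (π k).symm j' := by rw [← h, Equiv.symm_apply_apply]
          exact absurd (this ▸ hl') (not_lt.mpr hwk_le)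
        rw [hb'other k _ hne1 hne2]
        exact hk1 l' hl'
      · by_cases hgk1 : π k wk = j'
        · rw [hgk1, hb'kj]
          rw [hgk1] at hk2
          simp [hAdef] at hδA
          linarith
        · by_cases hgk2 : π k wk = gi
          · rw [hgk2, hb'kgi]
            rw [hgk2] at hk2
            linarith
          · rw [hb'other k _ hgk1 hgk2]
            exact hk2
  obtain ⟨wk', hwk'1, hwk'2, hwk'le⟩ := hk'
  have hLk : LexPref (π k) (b' k) (a k) := ⟨wk', hwk'1, hwk'2⟩
  -- b' satisfies all conditions
  have hb'Dom : ∀ x, b' x = a x ∨ LexPref (π x) (b' x) (a x) := by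
    intro x
    by_cases hx1 : x = i
    · subst hx1; exact Or.inr hLi
    · by_cases hx2 : x = k
      · subst hx2; exact Or.inr hLk
      · rw [hb'row x hx1 hx2]; exact hbDom x
  -- the measure strictly decreases
  have hrk_i : rk (π i) (b i) (a i) = w.1 := rk_eq h1 h2
  have hrk_i' : rk (π i) (b' i) (a i) = l.1 := rk_eq hli1 hli2
  have hrk_k : rk (π k) (b k) (a k) = wk.1 := rk_eq hk1 hk2
  have hrk_k' : rk (π k) (b' k) (a k) = wk'.1 := rk_eq hwk'1 hwk'2
  have hlt : ∑ x, rk (π x) (b' x) (a x) < ∑ x, rk (π x) (b x) (a x) := by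
    apply Finset.sum_lt_sum
    · intro x _
      by_cases hx1 : x = i
      · subst hx1; rw [hrk_i, hrk_i']; exact le_of_lt hlw
      · by_cases hx2 : x = k
        · subst hx2; rw [hrk_k, hrk_k']; exact hwk'le
        · rw [hb'row x hx1 hx2]
    · exact ⟨i, Finset.mem_univ i, by rw [hrk_i, hrk_i']; exact hlw⟩
  exact absurd (hmin b' hb'A hb'Dom ⟨i, hLi⟩) (not_le.mpr hlt)

/-- An allocation `a` fails to be Pareto efficient iff the greedy
sequential-filling procedure certifies this: there are a partial allocation `α`
dominated coordinatewise by `a`, a nonempty set `S₁` of agents, an `ε > 0`, for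
each agent of `S₁` her most-preferred good `g i` with remaining supply (all
strictly preferred goods being exhausted in `α`), and a completed allocation
`b` extending `α` that gives each agent of `S₁` at least `ε` more of `g i`,
which every agent of `S₁` strictly lexicographic-prefers to `a` and which is
unchanged for all other agents. -/
theorem pareto_iff_no_improving_step {n m : ℕ} (q : Fin m → ℝ) (r : Fin n → ℝ)
    (π : Fin n → Equiv.Perm (Fin m))
    (hq : ∀ j, 0 < q j) (hr : ∀ i, 0 < r i) (hsum : ∑ i, r i = ∑ j, q j)
    (a : Fin n → Fin m → ℝ) (hA : IsAlloc q r a) :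
    ¬ ParetoEff q r π a ↔
      ∃ (α : Fin n → Fin m → ℝ) (S₁ : Finset (Fin n)) (ε : ℝ)
        (g : Fin n → Fin m) (b : Fin n → Fin m → ℝ),
        IsPartialAlloc q r α ∧
        (∀ i j, α i j ≤ a i j) ∧
        S₁.Nonempty ∧ 0 < ε ∧
        (∀ i ∈ S₁,
          (∀ j', (π i).symm j' < (π i).symm (g i) → ∑ k, α k j' = q j') ∧
          ε ≤ q (g i) - ∑ k, α k (g i)) ∧
        IsAlloc q r b ∧
        (∀ i j, α i j ≤ b i j) ∧
        (∀ i ∈ S₁, α i (g i) + ε ≤ b i (g i) ∧ LexPref (π i) (b i) (a i)) ∧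
        (∀ i ∉ S₁, b i = a i) := by
  classical
  constructor
  · -- hard direction
    intro hNP
    rw [ParetoEff, not_not] at hNP
    have hPex : ∃ v : ℕ, ∃ b, (IsAlloc q r b ∧
        (∀ i, b i = a i ∨ LexPref (π i) (b i) (a i)) ∧
        (∃ i, LexPref (π i) (b i) (a i))) ∧
        ∑ x, rk (π x) (b x) (a x) = v := by
      obtain ⟨b, hb⟩ := hNP
      exact ⟨∑ x, rk (π x) (b x) (a x), b, hb, rfl⟩
    obtain ⟨b, ⟨hbA, hbDom, i0, hI0⟩, hbv⟩ := Nat.find_spec hPex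
    have hmin : ∀ b', IsAlloc q r b' →
        (∀ i, b' i = a i ∨ LexPref (π i) (b' i) (a i)) →
        (∃ i, LexPref (π i) (b' i) (a i)) →
        ∑ x, rk (π x) (b x) (a x) ≤ ∑ x, rk (π x) (b' x) (a x) := by
      intro b' h1 h2 h3
      rw [hbv]
      exact Nat.find_min' hPex ⟨b', ⟨h1, h2, h3⟩, rfl⟩
    have key := no_transfer q r π a hA b hbA hbDom hmin
    -- set of strictly improved agents
    set S₁ : Finset (Fin n) := univ.filter (fun i => b i ≠ a i) with hS₁def
    have hmemS : ∀ i, i ∈ S₁ ↔ b i ≠ a i := by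
      intro i; simp [hS₁def]
    have hSLex : ∀ i ∈ S₁, LexPref (π i) (b i) (a i) := by
      intro i hi
      exact (hbDom i).resolve_left ((hmemS i).mp hi)
    have hne : S₁.Nonempty := ⟨i0, (hmemS i0).mpr (lexPref_ne hI0)⟩
    have hm : 0 < m := by
      obtain ⟨w, _, _⟩ := hI0
      exact w.pos
    -- the target good of each agent
    set g : Fin n → Fin m := fun i =>
      if h : LexPref (π i) (b i) (a i) then π i (Classical.choose h)
      else π i ⟨0, hm⟩ with hgdef
    have hgspec : ∀ i ∈ S₁, (∀ l, l < (π i).symm (g i) →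
          b i (π i l) = a i (π i l)) ∧ a i (g i) < b i (g i) := by
      intro i hi
      have h := hSLex i hi
      have hg : g i = π i (Classical.choose h) := by
        rw [hgdef]; exact dif_pos h
      obtain ⟨hw1, hw2⟩ := Classical.choose_spec h
      rw [hg, Equiv.symm_apply_apply]
      exact ⟨hw1, hw2⟩
    -- partial allocation
    set α : Fin n → Fin m → ℝ := fun i j => min (a i j) (b i j) with hαdef
    have hαa : ∀ i j, α i j ≤ a i j := fun i j => min_le_left _ _
    have hαb : ∀ i j, α i j ≤ b i j := fun i j => min_le_right _ _
    have hαP : IsPartialAlloc q r α := by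
      refine ⟨fun i j => le_min (hA.1 i j) (hbA.1 i j), ?_, ?_⟩
      · intro i
        calc ∑ j, α i j ≤ ∑ j, a i j := Finset.sum_le_sum fun j _ => hαa i j
          _ = r i := hA.2.1 i
      · intro j
        calc ∑ i, α i j ≤ ∑ i, a i j := Finset.sum_le_sum fun i _ => hαa i j
          _ = q j := hA.2.2 j
    -- strictly preferred goods are exhausted
    have hexh : ∀ i ∈ S₁, ∀ j', (π i).symm j' < (π i).symm (g i) →
        ∀ k, b k j' = a k j' := by
      intro i hi j' hj' k
      obtain ⟨hw1, hw2⟩ := hgspec i hi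
      have hle : ∀ k', b k' j' ≤ a k' j' := by
        intro k'
        have := key i ((π i).symm (g i)) ((π i).symm j')
          (by simpa using hw1)
          (by rw [Equiv.apply_symm_apply]; exact hw2) hj' k'
        rwa [Equiv.apply_symm_apply] at this
      by_contra hne'
      have hlt : b k j' < a k j' := lt_of_le_of_ne (hle k) hne'
      have : ∑ x, b x j' < ∑ x, a x j' :=
        Finset.sum_lt_sum (fun x _ => hle x) ⟨k, Finset.mem_univ k, hlt⟩
      rw [hbA.2.2 j', hA.2.2 j'] at this
      exact lt_irrefl _ this
    -- ε
    set ε : ℝ := S₁.inf' hne (fun i => b i (g i) - a i (g i)) with hεdef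
    have hε0 : 0 < ε := by
      rw [hεdef, Finset.lt_inf'_iff]
      intro i hi
      have := (hgspec i hi).2
      linarith
    have hεle : ∀ i ∈ S₁, ε ≤ b i (g i) - a i (g i) := by
      intro i hi
      exact Finset.inf'_le _ hi
    refine ⟨α, S₁, ε, g, b, hαP, hαa, hne, hε0, ?_, hbA, hαb, ?_, ?_⟩
    · intro i hi
      constructor
      · intro j' hj'
        have hcol := hexh i hi j' hj'
        have : ∀ k, α k j' = a k j' := by
          intro k
          rw [hαdef]
          simp only
          rw [hcol k, min_self]
        rw [Finset.sum_congr rfl (fun k _ => this k)]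
        exact hA.2.2 j'
      · -- ε ≤ q (g i) - ∑ k, α k (g i)
        have h1 : ∑ k, α k (g i) + (b i (g i) - a i (g i)) ≤ ∑ k, b k (g i) := by
          have : ∑ k, α k (g i) + (b i (g i) - a i (g i)) =
              ∑ k, (α k (g i) + if k = i then b i (g i) - a i (g i) else 0) := by
            rw [Finset.sum_add_distrib, Finset.sum_ite_eq' univ i
              (fun _ => b i (g i) - a i (g i))]
            simp
          rw [this]
          apply Finset.sum_le_sum
          intro k _
          by_cases hk : k = i
          · subst hk
            rw [if_pos rfl]
            have : α k (g k) ≤ a k (g k) := hαa k (g k)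
            linarith
          · simp only [if_neg hk, add_zero]
            exact hαb k (g i)
        rw [hbA.2.2 (g i)] at h1
        have h2 := hεle i hi
        linarith
    · intro i hi
      refine ⟨?_, hSLex i hi⟩
      have h1 : α i (g i) ≤ a i (g i) := hαa i (g i)
      have h2 := hεle i hi
      linarith
    · intro i hi
      exact not_not.mp (fun h => hi ((hmemS i).mpr h))
  · -- easy direction
    rintro ⟨α, S₁, ε, g, b, hpα, hαa, ⟨i0, hi0⟩, hε, hS, hb, hαb, himp, hout⟩
    intro hPE
    exact hPE ⟨b, hb,
      fun i => if h : i ∈ S₁ then Or.inr (himp i h).2 else Or.inl (hout i h),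
      ⟨i0, (himp i0 hi0).2⟩⟩
end

section
/- In the extended SG mechanism with unequal speed functions, strategy-proofness fails: with m = n = 4, all r_i = q_j = 1, agent 1's speed constant 1 on [0,1], agents 2,3,4's speed equal to 1 on [0,1/2], 0 on (1/2,5/6], and 3 on (5/6,1], true preferences (1,2,3,4) for agents 1,2 and (2,4,3,1) for agents 3,4: truthful bidding gives agent 1 the sorted allocation (1/2, 0, 1/2, 0), while bidding (2,1,3,4) gives agent 1 the lexicographically better sorted allocation (1/2, 1/3, 1/6, 0). -/
open Finset

/-- Preference list `(2,4,3,1)` (0-indexed `(1,3,2,0)`). -/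
def perm34 : Equiv.Perm (Fin 4) :=
  ⟨![1, 3, 2, 0], ![3, 0, 2, 1], by decide, by decide⟩

/-- The speed functions: agent 1 at constant speed 1; agents 2,3,4 at speed 1
on `[0,1/2]`, 0 on `(1/2,5/6]`, and 3 on `(5/6,1]`. -/
noncomputable def speeds : Fin 4 → ℝ → ℝ := fun i t =>
  if i = 0 then 1 else if t ≤ 1 / 2 then 1 else if t ≤ 5 / 6 then 0 else 3

/-!
Agent `i` eats on `[s, t]` the amount `W i t - W i s`, where `W 0 = id` and `W i = H` for the three
agents who stall on `(1/2, 5/6]`. The exhaustion times `T` are therefore pinned down by the balance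
equations `∑ i, (W i (T j) - W i (min (s i j) (T j))) = 1`, with `s i j` the latest exhaustion time
among the goods that `i` bids before `j`. Resolving the `min`s and `max`s a few goods at a time gives
`T = (1/2, 1/2, 1, 1)` under truthful bidding and `T = (5/6, 1/3, 1, 17/18)` under the manipulation.
In the paper's numbering: agent 1 then takes a third of good 2 before agents 3 and 4 exhaust it at
time `1/3`, and because agent 2 stalls she still gets half of good 1.
-/

open MeasureTheory Set Interval

def IsIntervalPrimitive (F f : ℝ → ℝ) : Prop :=
  ∀ a b, IntervalIntegrable f volume a b ∧ ∫ t in a..b, f t = F b - F a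

lemma isIntervalPrimitive_affine (c d : ℝ) :
    IsIntervalPrimitive (fun x => c * x + d) (fun _ => c) := fun a b =>
  ⟨intervalIntegrable_const, by simp only [intervalIntegral.integral_const, smul_eq_mul]; ring⟩

lemma IsIntervalPrimitive.piecewise_le {F G f g : ℝ → ℝ} {c : ℝ}
    (hf : IsIntervalPrimitive F f) (hg : IsIntervalPrimitive G g) (hc : F c = G c) :
    IsIntervalPrimitive (fun x => if x ≤ c then F x else G x)
      (fun t => if t ≤ c then f t else g t) := by
  set P := fun x => if x ≤ c then F x else G x
  set p := fun t => if t ≤ c then f t else g t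
  have from_c : ∀ x, IntervalIntegrable p volume c x ∧ ∫ t in c..x, p t = P x - P c := by
    intro x
    have hPc : P c = F c := if_pos le_rfl
    rcases le_total x c with hx | hx
    · have heq : EqOn p f (Ι c x) := fun t ht => if_pos (uIoc_of_ge hx ▸ ht).2
      refine ⟨(intervalIntegrable_congr heq).2 (hf c x).1, ?_⟩
      rw [intervalIntegral.integral_congr_ae (Filter.Eventually.of_forall fun t ht => heq ht),
        (hf c x).2, hPc, show P x = F x from if_pos hx]
    · have heq : EqOn p g (Ι c x) := fun t ht => if_neg (uIoc_of_le hx ▸ ht).1.not_ge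
      refine ⟨(intervalIntegrable_congr heq).2 (hg c x).1, ?_⟩
      have hPx : P x = G x := by
        by_cases h : x ≤ c
        · rw [show P x = F x from if_pos h, le_antisymm h hx, hc]
        · exact if_neg h
      rw [intervalIntegral.integral_congr_ae (Filter.Eventually.of_forall fun t ht => heq ht),
        (hg c x).2, hPc, hPx, hc]
  intro a b
  refine ⟨(from_c a).1.symm.trans (from_c b).1, ?_⟩
  rw [← intervalIntegral.integral_interval_sub_left (from_c b).1 (from_c a).1, (from_c a).2,
    (from_c b).2]
  ring

lemma IsExtSGAllocT.sum_integral {n m : ℕ} {q : Fin m → ℝ} {η : Fin n → ℝ → ℝ}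
    {σ : Fin n → Equiv.Perm (Fin m)} {T : Fin m → ℝ} {a : Fin n → Fin m → ℝ}
    (h : IsExtSGAllocT q η σ T a) (j : Fin m) :
    ∑ i, ∫ t in (min (startTime σ T i j) (T j))..(T j), η i t = q j := by
  rw [← h.2.2 j]
  exact sum_congr rfl fun i _ => (h.2.1 i j).symm

noncomputable def stallingCumSpeed (x : ℝ) : ℝ :=
  if x ≤ 1/2 then x else if x ≤ 5/6 then 1/2 else 3 * x - 2

local notation "H" => stallingCumSpeed

lemma stallingCumSpeed_mono : Monotone H := by
  intro a b hab; simp only [stallingCumSpeed]; split_ifs <;> linarith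

lemma isIntervalPrimitive_stallingCumSpeed :
    IsIntervalPrimitive H (fun t => if t ≤ 1/2 then 1 else if t ≤ 5/6 then 0 else 3) := by
  have stall := (isIntervalPrimitive_affine 0 (1/2)).piecewise_le
    (isIntervalPrimitive_affine 3 (-2)) (c := 5/6) (by norm_num)
  convert (isIntervalPrimitive_affine 1 0).piecewise_le stall (c := 1/2) (by norm_num) using 1
  ext x; simp only [stallingCumSpeed]; split_ifs <;> ring

lemma integral_speeds_zero (a b : ℝ) : ∫ t in a..b, speeds 0 t = b - a := by
  simp [speeds]

lemma integral_speeds_of_ne_zero {i : Fin 4} (hi : i ≠ 0) (a b : ℝ) :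
    ∫ t in a..b, speeds i t = H b - H a := by
  simp only [speeds, if_neg hi]
  exact (isIntervalPrimitive_stallingCumSpeed a b).2

section Speeds

variable {σ : Fin 4 → Equiv.Perm (Fin 4)} {T : Fin 4 → ℝ} {a : Fin 4 → Fin 4 → ℝ}

lemma IsExtSGAllocT.speeds_alloc_zero (h : IsExtSGAllocT (fun _ => 1) speeds σ T a)
    (j : Fin 4) : a 0 j = T j - min (startTime σ T 0 j) (T j) := by
  rw [h.2.1, integral_speeds_zero]

lemma IsExtSGAllocT.speeds_balance (h : IsExtSGAllocT (fun _ => 1) speeds σ T a) (j : Fin 4) :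
    (T j - min (startTime σ T 0 j) (T j)) + (H (T j) - H (min (startTime σ T 1 j) (T j)))
      + (H (T j) - H (min (startTime σ T 2 j) (T j)))
      + (H (T j) - H (min (startTime σ T 3 j) (T j))) = 1 := by
  have := h.sum_integral j
  rwa [Fin.sum_univ_four, integral_speeds_zero, integral_speeds_of_ne_zero (by decide),
    integral_speeds_of_ne_zero (by decide), integral_speeds_of_ne_zero (by decide)] at this

end Speeds

lemma truthful_goods01_times {x y m : ℝ} (hym : y ≤ m)
    (E0 : x + H x + 2 * (H x - H (min m x)) = 1)
    (E1 : (y - min x y) + (H y - H (min x y)) + 2 * H y = 1) :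
    x = 1/2 ∧ y = 1/2 := by
  rcases le_total y x with hyx | hxy
  · rw [min_eq_right hyx] at E1
    have hy : 1/2 ≤ y := by simp only [stallingCumSpeed] at E1; split_ifs at E1 <;> linarith
    have hHx : H y ≤ H x := stallingCumSpeed_mono hyx
    have := stallingCumSpeed_mono (min_le_right m x)
    have hx : x + H x = 1 := by linarith
    have : x = 1/2 := by simp only [stallingCumSpeed] at hx; split_ifs at hx <;> linarith
    constructor <;> linarith
  · rw [min_eq_right (hxy.trans hym)] at E0
    have hx : x = 1/2 := by simp only [stallingCumSpeed] at E0; split_ifs at E0 <;> linarith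
    rw [min_eq_left hxy, hx] at E1
    have := stallingCumSpeed_mono (hx ▸ hxy)
    have hy : y = 1/2 := by simp only [stallingCumSpeed] at E1 this; split_ifs at E1 this <;> linarith
    exact ⟨hx, hy⟩

lemma truthful_goods23_times {z w : ℝ} (hz : z ≤ 1) (hw : w ≤ 1)
    (E2 : (z - min (1/2) z) + (H z - H (min (1/2) z)) + 2 * (H z - H (min (max (1/2) w) z)) = 1)
    (E3 : (w - min (max (1/2) z) w) + (H w - H (min (max (1/2) z) w))
      + 2 * (H w - H (min (1/2) w)) = 1) :
    z = 1 ∧ w = 1 := by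
  have hz' : 1/2 < z := by
    by_contra! h
    rw [min_eq_right h, min_eq_right (h.trans (le_max_left _ _))] at E2
    linarith
  have hw' : 1/2 < w := by
    by_contra! h
    rw [min_eq_right (h.trans (le_max_left _ _)), min_eq_right h] at E3
    linarith
  have half : H (1/2) = 1/2 := by norm_num [stallingCumSpeed]
  rw [min_eq_left hz'.le, half] at E2
  rw [min_eq_left hw'.le, half] at E3
  rcases le_or_gt w z with hwz | hzw
  · rw [min_eq_right (hwz.trans (le_max_right _ _))] at E3
    have : w = 1 := by simp only [stallingCumSpeed] at E3; split_ifs at E3 <;> linarith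
    constructor <;> linarith
  · rw [min_eq_right (hzw.le.trans (le_max_right _ _))] at E2
    have : z = 1 := by simp only [stallingCumSpeed] at E2; split_ifs at E2 <;> linarith
    linarith

lemma manipulated_good1_time {x y m : ℝ} (hym : y ≤ m)
    (F0 : (x - min y x) + H x + 2 * (H x - H (min m x)) = 1)
    (F1 : y + (H y - H (min x y)) + 2 * H y = 1) :
    y ≤ x ∧ y = 1/3 := by
  rcases le_total y x with hyx | hxy
  · rw [min_eq_right hyx] at F1
    have : y = 1/3 := by simp only [stallingCumSpeed] at F1; split_ifs at F1 <;> linarith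
    exact ⟨hyx, this⟩
  · rw [min_eq_right hxy, min_eq_right (hxy.trans hym)] at F0
    have hHx : H x = 1 := by linarith
    have : x = 1 := by simp only [stallingCumSpeed] at hHx; split_ifs at hHx <;> linarith
    rw [min_eq_left hxy] at F1
    have := stallingCumSpeed_mono hxy
    linarith

lemma manipulated_good0_time {x z w : ℝ} (hz : z ≤ 1)
    (F0 : (x - 1/3) + H x + 2 * (H x - H (min (max (1/3) (max z w)) x)) = 1)
    (F2 : (z - min (max x (1/3)) z) + (H z - H (min (max x (1/3)) z))
      + 2 * (H z - H (min (max (1/3) w) z)) = 1)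
    (F3 : (w - min (max x (max (1/3) z)) w) + (H w - H (min (max x (max (1/3) z)) w))
      + 2 * (H w - H (min (1/3) w)) = 1) :
    x = 5/6 := by
  rcases le_or_gt x (max z w) with hx | hx
  · rw [min_eq_right (hx.trans (le_max_right _ _))] at F0
    simp only [stallingCumSpeed] at F0; split_ifs at F0 <;> linarith
  · -- The agents bidding `perm34` would then force `w = 17/18` and, in turn, `z = 10/9`.
    exfalso
    have hzx : z < x := (le_max_left _ _).trans_lt hx
    have hwx : w < x := (le_max_right _ _).trans_lt hx
    rw [min_eq_right (hwx.le.trans (le_max_left _ _))] at F3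
    have hw : w = 17/18 := by
      rcases le_total w (1/3) with hw | hw
      · rw [min_eq_right hw] at F3; linarith
      · rw [min_eq_left hw] at F3
        norm_num [stallingCumSpeed] at F3
        split_ifs at F3 <;> linarith
    rw [min_eq_right (hzx.le.trans (le_max_left _ _)), hw,
      max_eq_right (by norm_num : (1:ℝ)/3 ≤ 17/18)] at F2
    rcases le_total z (17/18) with hz' | hz'
    · rw [min_eq_right hz'] at F2; linarith
    · rw [min_eq_left hz'] at F2
      norm_num [stallingCumSpeed] at F2
      split_ifs at F2 <;> linarith

lemma manipulated_goods23_times {z w : ℝ} (hz : z ≤ 1)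
    (F2 : (z - min (5/6) z) + (H z - H (min (5/6) z)) + 2 * (H z - H (min (max (1/3) w) z)) = 1)
    (F3 : (w - min (max (5/6) z) w) + (H w - H (min (max (5/6) z) w))
      + 2 * (H w - H (min (1/3) w)) = 1) :
    z = 1 ∧ w = 17/18 := by
  have third : H (1/3) = 1/3 := by norm_num [stallingCumSpeed]
  have five_sixths : H (5/6) = 1/2 := by norm_num [stallingCumSpeed]
  have hw : 5/6 < w := by
    by_contra! hw
    rw [min_eq_right (hw.trans (le_max_left _ _))] at F3
    rcases le_total w (1/3) with hw' | hw'
    · rw [min_eq_right hw'] at F3; linarith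
    · rw [min_eq_left hw', third] at F3
      simp only [stallingCumSpeed] at F3; split_ifs at F3 <;> linarith
  rw [min_eq_left (by linarith : (1:ℝ)/3 ≤ w), third] at F3
  rcases le_or_gt w (max (5/6) z) with hwz | hzw
  · rw [min_eq_right hwz] at F3
    have hw' : w = 17/18 := by simp only [stallingCumSpeed] at F3; split_ifs at F3 <;> linarith
    have hz' : 17/18 ≤ z := by
      rcases le_max_iff.1 (hw' ▸ hwz) with h | h
      · norm_num at h
      · exact h
    rw [hw', max_eq_right (by norm_num : (1:ℝ)/3 ≤ 17/18), min_eq_left hz',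
      min_eq_left (by linarith : (5:ℝ)/6 ≤ z)] at F2
    refine ⟨?_, hw'⟩
    norm_num [stallingCumSpeed] at F2
    split_ifs at F2 <;> linarith
  · have hzw' : z < w := (le_max_right _ _).trans_lt hzw
    rw [min_eq_right (hzw'.le.trans (le_max_right _ _))] at F2
    exfalso
    rcases le_total z (5/6) with hz' | hz'
    · rw [min_eq_right hz'] at F2; linarith
    · rw [min_eq_left hz', five_sixths] at F2
      simp only [stallingCumSpeed] at F2; split_ifs at F2 <;> linarith

theorem univ_fin_four : (univ : Finset (Fin 4)) = {0, 1, 2, 3} := by decide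

def truthfulBids : Fin 4 → Equiv.Perm (Fin 4) :=
  ![Equiv.refl (Fin 4), Equiv.refl (Fin 4), perm34, perm34]

def manipulatedBids : Fin 4 → Equiv.Perm (Fin 4) :=
  ![Equiv.swap 0 1, Equiv.refl (Fin 4), perm34, perm34]

section Profiles

variable {T : Fin 4 → ℝ} {a : Fin 4 → Fin 4 → ℝ}

lemma startTime_truthfulBids (hT : ∀ j, 0 ≤ T j) :
    startTime truthfulBids T = ![
      ![0, T 0, max (T 0) (T 1), max (T 0) (max (T 1) (T 2))],
      ![0, T 0, max (T 0) (T 1), max (T 0) (max (T 1) (T 2))],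
      ![max (T 1) (max (T 2) (T 3)), 0, max (T 1) (T 3), T 1],
      ![max (T 1) (max (T 2) (T 3)), 0, max (T 1) (T 3), T 1] ] := by
  ext i j
  fin_cases i <;> fin_cases j <;>
    simp [startTime, truthfulBids, perm34, univ_fin_four, filter_insert, filter_singleton, hT]

lemma startTime_manipulatedBids (hT : ∀ j, 0 ≤ T j) :
    startTime manipulatedBids T = ![
      ![T 1, 0, max (T 0) (T 1), max (T 0) (max (T 1) (T 2))],
      ![0, T 0, max (T 0) (T 1), max (T 0) (max (T 1) (T 2))],
      ![max (T 1) (max (T 2) (T 3)), 0, max (T 1) (T 3), T 1],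
      ![max (T 1) (max (T 2) (T 3)), 0, max (T 1) (T 3), T 1] ] := by
  ext i j
  fin_cases i <;> fin_cases j <;>
    simp [startTime, manipulatedBids, perm34, univ_fin_four, filter_insert, filter_singleton, hT,
      Equiv.swap_apply_def]

lemma IsExtSGAllocT.truthful_balance (h : IsExtSGAllocT (fun _ => 1) speeds truthfulBids T a) :
    T 0 + H (T 0) + 2 * (H (T 0) - H (min (max (T 1) (max (T 2) (T 3))) (T 0))) = 1 ∧
    (T 1 - min (T 0) (T 1)) + (H (T 1) - H (min (T 0) (T 1))) + 2 * H (T 1) = 1 ∧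
    (T 2 - min (max (T 0) (T 1)) (T 2)) + (H (T 2) - H (min (max (T 0) (T 1)) (T 2)))
      + 2 * (H (T 2) - H (min (max (T 1) (T 3)) (T 2))) = 1 ∧
    (T 3 - min (max (T 0) (max (T 1) (T 2))) (T 3))
      + (H (T 3) - H (min (max (T 0) (max (T 1) (T 2))) (T 3)))
      + 2 * (H (T 3) - H (min (T 1) (T 3))) = 1 := by
  have hT : ∀ j, 0 ≤ T j := fun j => (h.1 j).1
  have H0 : H 0 = 0 := by norm_num [stallingCumSpeed]
  have E0 := h.speeds_balance 0
  have E1 := h.speeds_balance 1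
  have E2 := h.speeds_balance 2
  have E3 := h.speeds_balance 3
  simp only [startTime_truthfulBids hT, Matrix.cons_val', Matrix.cons_val_zero,
    Matrix.cons_val_fin_one, Matrix.cons_val_one, Matrix.cons_val, min_eq_left (hT _), H0,
    sub_zero] at E0 E1 E2 E3
  refine ⟨?_, ?_, ?_, ?_⟩ <;> linarith

lemma IsExtSGAllocT.manipulated_balance
    (h : IsExtSGAllocT (fun _ => 1) speeds manipulatedBids T a) :
    (T 0 - min (T 1) (T 0)) + H (T 0) + 2 * (H (T 0) - H (min (max (T 1) (max (T 2) (T 3))) (T 0)))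
      = 1 ∧
    T 1 + (H (T 1) - H (min (T 0) (T 1))) + 2 * H (T 1) = 1 ∧
    (T 2 - min (max (T 0) (T 1)) (T 2)) + (H (T 2) - H (min (max (T 0) (T 1)) (T 2)))
      + 2 * (H (T 2) - H (min (max (T 1) (T 3)) (T 2))) = 1 ∧
    (T 3 - min (max (T 0) (max (T 1) (T 2))) (T 3))
      + (H (T 3) - H (min (max (T 0) (max (T 1) (T 2))) (T 3)))
      + 2 * (H (T 3) - H (min (T 1) (T 3))) = 1 := by
  have hT : ∀ j, 0 ≤ T j := fun j => (h.1 j).1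
  have H0 : H 0 = 0 := by norm_num [stallingCumSpeed]
  have E0 := h.speeds_balance 0
  have E1 := h.speeds_balance 1
  have E2 := h.speeds_balance 2
  have E3 := h.speeds_balance 3
  simp only [startTime_manipulatedBids hT, Matrix.cons_val', Matrix.cons_val_zero,
    Matrix.cons_val_fin_one, Matrix.cons_val_one, Matrix.cons_val, min_eq_left (hT _), H0,
    sub_zero] at E0 E1 E2 E3
  refine ⟨?_, ?_, ?_, ?_⟩ <;> linarith

lemma IsExtSGAllocT.truthful_exhaustion_times
    (h : IsExtSGAllocT (fun _ => 1) speeds truthfulBids T a) :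
    T = ![1/2, 1/2, 1, 1] := by
  obtain ⟨E0, E1, E2, E3⟩ := h.truthful_balance
  obtain ⟨h0, h1⟩ := truthful_goods01_times (le_max_left _ _) E0 E1
  rw [h0, h1, max_self] at E2
  rw [h0, h1, ← max_assoc, max_self] at E3
  obtain ⟨h2, h3⟩ := truthful_goods23_times (h.1 2).2 (h.1 3).2 E2 E3
  ext j
  fin_cases j <;> assumption

lemma IsExtSGAllocT.manipulated_exhaustion_times
    (h : IsExtSGAllocT (fun _ => 1) speeds manipulatedBids T a) :
    T = ![5/6, 1/3, 1, 17/18] := by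
  obtain ⟨F0, F1, F2, F3⟩ := h.manipulated_balance
  obtain ⟨h10, h1⟩ := manipulated_good1_time (le_max_left _ _) F0 F1
  rw [min_eq_left h10, h1] at F0
  rw [h1] at F2 F3
  have h0 := manipulated_good0_time (h.1 2).2 F0 F2 F3
  rw [h0, max_eq_left (by norm_num : (1:ℝ)/3 ≤ 5/6)] at F2
  rw [h0, ← max_assoc, max_eq_left (by norm_num : (1:ℝ)/3 ≤ 5/6)] at F3
  obtain ⟨h2, h3⟩ := manipulated_goods23_times (h.1 2).2 F2 F3
  ext j
  fin_cases j <;> assumption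

lemma IsExtSGAllocT.truthful_alloc_zero
    (h : IsExtSGAllocT (fun _ => 1) speeds truthfulBids T a) : a 0 = ![1/2, 0, 1/2, 0] := by
  have hT : ∀ j, 0 ≤ T j := fun j => (h.1 j).1
  ext j
  rw [h.speeds_alloc_zero, startTime_truthfulBids hT, h.truthful_exhaustion_times]
  fin_cases j <;> norm_num [Matrix.cons_val_two]

lemma IsExtSGAllocT.manipulated_alloc_zero
    (h : IsExtSGAllocT (fun _ => 1) speeds manipulatedBids T a) :
    a 0 = ![1/2, 1/3, 1/6, 0] := by
  have hT : ∀ j, 0 ≤ T j := fun j => (h.1 j).1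
  ext j
  rw [h.speeds_alloc_zero, startTime_manipulatedBids hT, h.manipulated_exhaustion_times]
  fin_cases j <;> norm_num [Matrix.cons_val_two]

end Profiles

theorem extSG_not_strategyproof_general
    (aπ aσ : Fin 4 → Fin 4 → ℝ)
    (hπ : IsExtSGAlloc (fun _ => 1) speeds
      ![Equiv.refl (Fin 4), Equiv.refl (Fin 4), perm34, perm34] aπ)
    (hσ : IsExtSGAlloc (fun _ => 1) speeds
      ![Equiv.swap 0 1, Equiv.refl (Fin 4), perm34, perm34] aσ) :
    (∀ l, aπ 0 (Equiv.refl (Fin 4) l) = (![1/2, 0, 1/2, 0] : Fin 4 → ℝ) l) ∧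
    (∀ l, aσ 0 (Equiv.refl (Fin 4) l) = (![1/2, 1/3, 1/6, 0] : Fin 4 → ℝ) l) ∧
    LexPref (Equiv.refl (Fin 4)) (aσ 0) (aπ 0) := by
  obtain ⟨T, hT⟩ := hπ
  obtain ⟨S, hS⟩ := hσ
  have truthful : aπ 0 = ![1/2, 0, 1/2, 0] := IsExtSGAllocT.truthful_alloc_zero hT
  have manipulated : aσ 0 = ![1/2, 1/3, 1/6, 0] := IsExtSGAllocT.manipulated_alloc_zero hS
  refine ⟨fun l => congrFun truthful l, fun l => congrFun manipulated l, 1, ?_, ?_⟩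
  · intro l hl
    obtain rfl : l = 0 := by omega
    simp [truthful, manipulated]
  · simp [truthful, manipulated]

/-- Strategy-proofness fails for the extended SG mechanism with unequal speed
functions: with the above speeds, all `r_i = q_j = 1`, true preferences
`(1,2,3,4)` for agents 1,2 and `(2,4,3,1)` for agents 3,4, truthful bidding
gives agent 1 the sorted allocation `(1/2, 0, 1/2, 0)`, while bidding
`(2,1,3,4)` gives her the lexicographically better `(1/2, 1/3, 1/6, 0)`. -/
theorem extSG_not_strategyproof
    (aπ aσ : Fin 4 → Fin 4 → ℝ)
    (hAπ : IsAlloc (fun _ => 1) (fun _ => 1) aπ)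
    (hπ : IsExtSGAlloc (fun _ => 1) speeds
      ![Equiv.refl (Fin 4), Equiv.refl (Fin 4), perm34, perm34] aπ)
    (hAσ : IsAlloc (fun _ => 1) (fun _ => 1) aσ)
    (hσ : IsExtSGAlloc (fun _ => 1) speeds
      ![Equiv.swap 0 1, Equiv.refl (Fin 4), perm34, perm34] aσ) :
    (∀ l, aπ 0 (Equiv.refl (Fin 4) l) = (![1/2, 0, 1/2, 0] : Fin 4 → ℝ) l) ∧
    (∀ l, aσ 0 (Equiv.refl (Fin 4) l) = (![1/2, 1/3, 1/6, 0] : Fin 4 → ℝ) l) ∧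
    LexPref (Equiv.refl (Fin 4)) (aσ 0) (aπ 0) :=
  extSG_not_strategyproof_general aπ aσ hπ hσ
end

section
/- In the SG mechanism with truthful bids, the allocation is equitable with respect to each agent's top 1 choice: the SG allocation a^π maximizes, over all feasible allocations a, the minimum over agents i of a_{iπ_i(1)}/r_i. -/
open Finset

/-! Under SG every agent eats her top good from time 0 until it is exhausted, so her normalised
top share is the exhaustion time of that good, and the SG objective is the earliest exhaustion
time `t` of a top good `j`. Nobody else touches `j` before `t`, so `j` is shared entirely by the
agents ranking it first, each receiving `r i * t`. Any feasible allocation hands these agents at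
most `q j = t * ∑ r i` of `j`, hence one of them receives at most `r i * t` of her top good. -/

theorem startTime_top {n m : ℕ} (σ : Fin n → Equiv.Perm (Fin (m + 1))) (T : Fin (m + 1) → ℝ)
    (i : Fin n) : startTime σ T i (σ i 0) = 0 := by
  simp [startTime]

theorem le_startTime_of_top_ne {n m : ℕ} {σ : Fin n → Equiv.Perm (Fin (m + 1))}
    (T : Fin (m + 1) → ℝ) {i : Fin n} {j : Fin (m + 1)} (hj : σ i 0 ≠ j) :
    T (σ i 0) ≤ startTime σ T i j := by
  rw [startTime, le_fold_max]
  refine Or.inr ⟨σ i 0, ?_, le_rfl⟩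
  have : (σ i).symm j ≠ 0 := fun h => hj (by rw [← h, Equiv.apply_symm_apply])
  simpa using Fin.pos_of_ne_zero this

theorem IsAlloc.sum_le {n m : ℕ} {q : Fin m → ℝ} {r : Fin n → ℝ} {a : Fin n → Fin m → ℝ}
    (ha : IsAlloc q r a) (s : Finset (Fin n)) (j : Fin m) : ∑ i ∈ s, a i j ≤ q j := by
  rw [← ha.2.2 j]
  exact sum_le_sum_of_subset_of_nonneg (subset_univ s) fun i _ _ => ha.1 i j

namespace IsSGAllocT

variable {n m : ℕ} {q : Fin (m + 1) → ℝ} {r : Fin n → ℝ} {σ : Fin n → Equiv.Perm (Fin (m + 1))}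
  {T : Fin (m + 1) → ℝ} {a : Fin n → Fin (m + 1) → ℝ}

theorem apply_top (h : IsSGAllocT q r σ T a) (i : Fin n) : a i (σ i 0) = r i * T (σ i 0) := by
  rw [h.2.1, startTime_top, sub_zero, max_eq_right (h.1 _).1]

theorem apply_top_div (h : IsSGAllocT q r σ T a) {i : Fin n} (hi : r i ≠ 0) :
    a i (σ i 0) / r i = T (σ i 0) := by
  rw [h.apply_top, mul_div_cancel_left₀ _ hi]

theorem apply_eq_zero (h : IsSGAllocT q r σ T a) {i : Fin n} {j : Fin (m + 1)}
    (hj : σ i 0 ≠ j) (hT : T j ≤ T (σ i 0)) : a i j = 0 := by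
  have : T j - startTime σ T i j ≤ 0 := by
    linarith [le_startTime_of_top_ne T hj]
  rw [h.2.1, max_eq_left this, mul_zero]

theorem quantity_eq_of_le_top (h : IsSGAllocT q r σ T a) {j : Fin (m + 1)}
    (hj : ∀ i, T j ≤ T (σ i 0)) : q j = ∑ i with σ i 0 = j, r i * T j := by
  rw [← h.2.2 j, ← sum_filter_add_sum_filter_not univ (fun i => σ i 0 = j)]
  have hout : ∑ i with ¬σ i 0 = j, a i j = 0 :=
    sum_eq_zero fun i hi => h.apply_eq_zero (mem_filter.mp hi).2 (hj i)
  rw [hout, add_zero]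
  refine sum_congr rfl fun i hi => ?_
  rw [← (mem_filter.mp hi).2, h.apply_top]

end IsSGAllocT

theorem sg_equitable_top1_general {n m : ℕ} (q : Fin (m + 1) → ℝ)
    (r : Fin (n + 1) → ℝ) (π : Fin (n + 1) → Equiv.Perm (Fin (m + 1)))
    (hr : ∀ i, 0 < r i)
    (aπ : Fin (n + 1) → Fin (m + 1) → ℝ)
    (hSG : IsSGAlloc q r π aπ) :
    ∀ a, IsAlloc q r a →
      Finset.univ.inf' Finset.univ_nonempty
        (fun i : Fin (n + 1) => a i (π i 0) / r i) ≤
      Finset.univ.inf' Finset.univ_nonempty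
        (fun i : Fin (n + 1) => aπ i (π i 0) / r i) := by
  obtain ⟨T, hSG⟩ := hSG
  intro a ha
  obtain ⟨i₀, -, hi₀⟩ := exists_mem_eq_inf' univ_nonempty fun i => T (π i 0)
  have hmin : ∀ i, T (π i₀ 0) ≤ T (π i 0) := fun i => hi₀ ▸ inf'_le _ (mem_univ i)
  have hRHS : univ.inf' univ_nonempty (fun i => aπ i (π i 0) / r i) = T (π i₀ 0) := by
    rw [← hi₀]
    exact inf'_congr _ rfl fun i _ => hSG.apply_top_div (hr i).ne'
  have hshare : ∑ i with π i 0 = π i₀ 0, a i (π i₀ 0)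
      ≤ ∑ i with π i 0 = π i₀ 0, r i * T (π i₀ 0) :=
    hSG.quantity_eq_of_le_top hmin ▸ ha.sum_le _ _
  obtain ⟨i₁, hi₁, hle⟩ := exists_le_of_sum_le ⟨i₀, by simp⟩ hshare
  calc univ.inf' univ_nonempty (fun i => a i (π i 0) / r i)
      ≤ a i₁ (π i₁ 0) / r i₁ := inf'_le _ (mem_univ i₁)
    _ ≤ T (π i₀ 0) := by
        rw [(mem_filter.mp hi₁).2, div_le_iff₀ (hr i₁), mul_comm]
        exact hle
    _ = _ := hRHS.symm

/-- The SG allocation under truthful bids is equitable w.r.t. each agent's top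
choice: it maximizes, over all feasible allocations, the minimum over agents of
`a_{i π_i(1)} / r_i`. -/
theorem sg_equitable_top1 {n m : ℕ} (q : Fin (m + 1) → ℝ)
    (r : Fin (n + 1) → ℝ) (π : Fin (n + 1) → Equiv.Perm (Fin (m + 1)))
    (hq : ∀ j, 0 < q j) (hr : ∀ i, 0 < r i) (hsum : ∑ i, r i = ∑ j, q j)
    (aπ : Fin (n + 1) → Fin (m + 1) → ℝ)
    (hA : IsAlloc q r aπ) (hSG : IsSGAlloc q r π aπ) :
    ∀ a, IsAlloc q r a →
      Finset.univ.inf' Finset.univ_nonempty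
        (fun i : Fin (n + 1) => a i (π i 0) / r i) ≤
      Finset.univ.inf' Finset.univ_nonempty
        (fun i : Fin (n + 1) => aπ i (π i 0) / r i) :=
  sg_equitable_top1_general q r π hr aπ hSG
end
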